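/- arXiv:1408.0596 — 3 statements merged into one kernel-verified Lean document; each statement's English description precedes it below -/
import Mathlib

section
/- Let Δ ≥ 4, let G be a finite simple graph of maximum degree at most Δ, let M be the output matching of a 1-2-MinGreedy execution on G, and let M* be a maximum matching of G in normal form with respect to M. Let X be an M-augmenting path of (V, M ∪ M*) with creation step i (selected vertex u_i, matched with v_i), suppose the degree of u_i in G_{i-1} is at least 3, and suppose a degree-1 endpoint exists after creation of X, i.e. some transfer with source u_i or v_i targets an endpoint w with degree exactly 1 in G_i. Let u_{i+1}, v_{i+1} be the vertices matched at step i+1 with selected vertex u_{i+1}. Define W as the set of endpoints of M-augmenting paths of (V, M ∪ M*) that are adjacent in G_{i-1} to u_i or v_i and have degree at least 3 in G_{i-1}; W_1 = {w ∈ W : deg_{G_i}(w) = 1}; W_2 = {w ∈ W : deg_{G_i}(w) = 2}; for f ∈ {1,2}, W_1^f = {w ∈ W_1 : exactly f of the edges {w,u_i}, {w,v_i} lie in F}; and let E(W) be the set of edges of G_{i-1} joining u_i or v_i to a vertex of W. Then: (a) the number of transfers with source u_i or v_i equals 2|W_1^2| + |W_1^1|; (b) the number of uncanceled transfers with source v_{i+1}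 is at most |W_1^1| + |W_2|; (c) 2|W_1^2| + 2|W_1^1| + |W_2| ≤ |E(W)| ≤ 2(Δ−2). -/
namespace MinGreedy

noncomputable section

open SimpleGraph

/-- The degree of a vertex `x` in the graph `H`. -/
def deg {V : Type} (H : SimpleGraph V) (x : V) : ℕ :=
  (H.neighborSet x).ncard

/-- `M` is a matching of `G`, given as a set of pairwise disjoint edges of `G`. -/
def IsMatchingSet {V : Type} (G : SimpleGraph V) (M : Set (Sym2 V)) : Prop :=
  M ⊆ G.edgeSet ∧ ∀ e ∈ M, ∀ f ∈ M, e ≠ f → ∀ x : V, x ∈ e → x ∉ f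

/-- `M` is a maximum matching of `G`. -/
def IsMaxMatchingSet {V : Type} (G : SimpleGraph V) (M : Set (Sym2 V)) : Prop :=
  IsMatchingSet G M ∧ ∀ N : Set (Sym2 V), IsMatchingSet G N → N.ncard ≤ M.ncard

/-- `ν G`, the maximum size of a matching of `G`. -/
def nu {V : Type} (G : SimpleGraph V) : ℕ :=
  sSup {n | ∃ M : Set (Sym2 V), IsMatchingSet G M ∧ M.ncard = n}

/-- `G` has maximum degree at most `Δ`. -/
def maxDegLE {V : Type} (G : SimpleGraph V) (Δ : ℕ) : Prop :=
  ∀ x : V, deg G x ≤ Δ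

/-- An execution of a greedy matching algorithm on `G`: in step `i` (`0 ≤ i < k`) the
edge `{sel i, oth i}` of `Gs i` is picked with selected vertex `sel i`, and `Gs (i+1)`
is obtained from `Gs i` by deleting all edges incident with `sel i` or `oth i`;
at the end `Gs k` has no edges. -/
structure GreedyExec (V : Type) (G : SimpleGraph V) where
  k : ℕ
  Gs : ℕ → SimpleGraph V
  sel : ℕ → V
  oth : ℕ → V
  init : Gs 0 = G
  adj : ∀ i < k, (Gs i).Adj (sel i) (oth i)
  step : ∀ i < k, Gs (i + 1) =
    SimpleGraph.fromEdgeSet {e | e ∈ (Gs i).edgeSet ∧ sel i ∉ e ∧ oth i ∉ e}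
  final : (Gs k).edgeSet = ∅

/-- The output matching `M = {e_1, …, e_k}` of an execution. -/
def GreedyExec.M {V : Type} {G : SimpleGraph V} (E : GreedyExec V G) : Set (Sym2 V) :=
  {e | ∃ i < E.k, e = s(E.sel i, E.oth i)}

/-- The execution is a MinGreedy execution: in each step the selected vertex has
minimum positive degree in the current graph. -/
def GreedyExec.IsMinGreedy {V : Type} {G : SimpleGraph V} (E : GreedyExec V G) : Prop :=
  ∀ i < E.k, ∀ x : V, 0 < deg (E.Gs i) x → deg (E.Gs i) (E.sel i) ≤ deg (E.Gs i) x

/-- The execution is a 1-2-MinGreedy execution: whenever the current graph has a vertex of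
degree 1 or 2, the selected vertex has minimum positive degree in the current graph. -/
def GreedyExec.Is12MinGreedy {V : Type} {G : SimpleGraph V} (E : GreedyExec V G) : Prop :=
  ∀ i < E.k, (∃ x : V, deg (E.Gs i) x = 1 ∨ deg (E.Gs i) x = 2) →
    ∀ x : V, 0 < deg (E.Gs i) x → deg (E.Gs i) (E.sel i) ≤ deg (E.Gs i) x

/-- `p 0, p 1, …, p (2m+1)` is an `M`-augmenting path: an `M`-alternating path whose
first and last edges lie in `Mopt` and whose two endpoints `p 0` and `p (2m+1)` are
not covered by `M`; it has `m` edges of `M` and `m+1` edges of `Mopt`. -/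
def IsAugPath {V : Type} (M Mopt : Set (Sym2 V)) (m : ℕ) (p : ℕ → V) : Prop :=
  (∀ i ≤ 2 * m + 1, ∀ j ≤ 2 * m + 1, p i = p j → i = j) ∧
  (∀ j ≤ 2 * m, (j % 2 = 0 → s(p j, p (j + 1)) ∈ Mopt) ∧
                (j % 2 = 1 → s(p j, p (j + 1)) ∈ M)) ∧
  (∀ e ∈ M, p 0 ∉ e ∧ p (2 * m + 1) ∉ e)

/-- The vertex set of the path `p 0, …, p (2m+1)`. -/
def pathSupp {V : Type} (m : ℕ) (p : ℕ → V) : Set V := p '' {j | j ≤ 2 * m + 1}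

/-- `w` is an endpoint of an `M`-augmenting path of the graph `(V, M ∪ Mopt)`. -/
def IsPathEndpoint {V : Type} (M Mopt : Set (Sym2 V)) (w : V) : Prop :=
  ∃ m p, IsAugPath M Mopt m p ∧ (w = p 0 ∨ w = p (2 * m + 1))

/-- `S` is the vertex set of a singleton component: a single edge of `M ∩ Mopt`. -/
def IsSingletonComp {V : Type} (M Mopt : Set (Sym2 V)) (S : Set V) : Prop :=
  ∃ x y : V, x ≠ y ∧ s(x, y) ∈ M ∧ s(x, y) ∈ Mopt ∧ S = ({x, y} : Set V)

/-- `Mopt` is a maximum matching of `G` in normal form with respect to `M`: every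
(nontrivial) connected component of the graph `(V, M ∪ Mopt)` is a singleton
(a single edge of `M ∩ Mopt`) or an `M`-augmenting path. -/
def NormalForm {V : Type} (G : SimpleGraph V) (M Mopt : Set (Sym2 V)) : Prop :=
  IsMaxMatchingSet G Mopt ∧
  ∀ C : (SimpleGraph.fromEdgeSet (M ∪ Mopt)).ConnectedComponent,
    2 ≤ C.supp.ncard →
    IsSingletonComp M Mopt C.supp ∨
    ∃ m p, IsAugPath M Mopt m p ∧ C.supp = pathSupp m p

/-- `{x, y}` is an edge of `F = E ∖ (M ∪ Mopt)`. -/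
def FEdge {V : Type} (G : SimpleGraph V) (M Mopt : Set (Sym2 V)) (x y : V) : Prop :=
  s(x, y) ∈ G.edgeSet ∧ s(x, y) ∉ M ∧ s(x, y) ∉ Mopt

/-- The number of `F`-edges incident with `x`. -/
def Fdeg {V : Type} (G : SimpleGraph V) (M Mopt : Set (Sym2 V)) (x : V) : ℕ :=
  {e : Sym2 V | e ∈ G.edgeSet ∧ e ∉ M ∧ e ∉ Mopt ∧ x ∈ e}.ncard

/-- `x` is matched at step `i` of the execution, i.e. `x ∈ e_i`. -/
def matchedAt {V : Type} {G : SimpleGraph V} (E : GreedyExec V G) (i : ℕ) (x : V) : Prop :=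
  i < E.k ∧ (x = E.sel i ∨ x = E.oth i)

/-- The `F`-edge `{v, w}` is a transfer from `v` to `w` arising at step `i`: `w` is an
endpoint of an `M`-augmenting path, `v` is matched at step `i` and the degree of `w`
in the graph after step `i` is at most 1. -/
def transferAt {V : Type} {G : SimpleGraph V} (E : GreedyExec V G)
    (M Mopt : Set (Sym2 V)) (i : ℕ) (v w : V) : Prop :=
  FEdge G M Mopt v w ∧ IsPathEndpoint M Mopt w ∧ matchedAt E i v ∧
  deg (E.Gs (i + 1)) w ≤ 1

/-- The edge `{v, w}` is a transfer from `v` to `w`. -/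
def IsTransfer {V : Type} {G : SimpleGraph V} (E : GreedyExec V G)
    (M Mopt : Set (Sym2 V)) (v w : V) : Prop :=
  ∃ i, transferAt E M Mopt i v w

/-- `(v, w)` is an uncanceled transfer arising at step `i`: it is a transfer arising at
step `i` and it is not the case that (`w` has degree exactly 1 before step `i` with its
unique incident edge being `{v, w}`, and `w` is the target of at least two uncanceled
transfers arising at steps before `i`). -/
def uncanceledAt {V : Type} {G : SimpleGraph V} (E : GreedyExec V G)
    (M Mopt : Set (Sym2 V)) (i : ℕ) : V → V → Prop :=
  Nat.strongRecOn (motive := fun _ => V → V → Prop) i (fun i ih v w =>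
    transferAt E M Mopt i v w ∧
    ¬(deg (E.Gs i) w = 1 ∧ (E.Gs i).Adj v w ∧
      ∃ (j₁ : ℕ) (h₁ : j₁ < i) (v₁ : V) (j₂ : ℕ) (h₂ : j₂ < i) (v₂ : V),
        ih j₁ h₁ v₁ w ∧ ih j₂ h₂ v₂ w ∧ (j₁, v₁) ≠ (j₂, v₂)))

/-- `(v, w)` is an uncanceled transfer. -/
def IsUncanceledTransfer {V : Type} {G : SimpleGraph V} (E : GreedyExec V G)
    (M Mopt : Set (Sym2 V)) (v w : V) : Prop :=
  ∃ i, uncanceledAt E M Mopt i v w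

/-- `(v, w)` is a canceled transfer. -/
def IsCanceledTransfer {V : Type} {G : SimpleGraph V} (E : GreedyExec V G)
    (M Mopt : Set (Sym2 V)) (v w : V) : Prop :=
  IsTransfer E M Mopt v w ∧ ¬IsUncanceledTransfer E M Mopt v w

/-- `d_X`: the number of transfers whose source lies in the vertex set `X`. -/
def debits {V : Type} {G : SimpleGraph V} (E : GreedyExec V G)
    (M Mopt : Set (Sym2 V)) (X : Set V) : ℕ :=
  {q : V × V | IsTransfer E M Mopt q.1 q.2 ∧ q.1 ∈ X}.ncard

/-- `c_X`: the number of transfers whose target lies in the vertex set `X`. -/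
def credits {V : Type} {G : SimpleGraph V} (E : GreedyExec V G)
    (M Mopt : Set (Sym2 V)) (X : Set V) : ℕ :=
  {q : V × V | IsTransfer E M Mopt q.1 q.2 ∧ q.2 ∈ X}.ncard

/-- `i` is the creation step of the component with vertex set `X`: the step in which the
first edge of `M` lying in `X` is picked. -/
def creationStep {V : Type} {G : SimpleGraph V} (E : GreedyExec V G)
    (X : Set V) (i : ℕ) : Prop :=
  i < E.k ∧ E.sel i ∈ X ∧ E.oth i ∈ X ∧ ∀ j < i, ¬(E.sel j ∈ X ∧ E.oth j ∈ X)

/-- A degree-1 endpoint exists after the creation step `i`: some transfer with source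
`sel i` or `oth i` targets an endpoint `w` of degree exactly 1 after step `i`. -/
def Deg1EndpointAfter {V : Type} {G : SimpleGraph V} (E : GreedyExec V G)
    (M Mopt : Set (Sym2 V)) (i : ℕ) : Prop :=
  ∃ v w : V, (v = E.sel i ∨ v = E.oth i) ∧ transferAt E M Mopt i v w ∧
    deg (E.Gs (i + 1)) w = 1

/-!
Since `u_i` has degree at least 3 and the execution is 1-2-MinGreedy, no vertex of `G_{i-1}` has
degree 1 or 2. An endpoint `w` of an augmenting path is never matched, so its edges to `u_i` and
`v_i` survive until step `i`, and in step `i` it loses exactly those edges. Hence a transfer from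
`u_i` or `v_i` can only land on an endpoint dropping from degree at least 3 to degree 1, i.e. on
some `w ∈ W_1` adjacent to both `u_i` and `v_i`, which gives (a) by counting `F`-edges.

The degree-1 endpoint forces step `i + 1` to select a vertex `u_{i+1}` of degree 1 whose only
neighbour is `v_{i+1}`; it was adjacent to both `u_i` and `v_i`, so besides `u_iv_i` each of
`u_i`, `v_i` has at most `Δ - 2` edges to `W`, while every vertex of `W_1` sends two edges to
`{u_i, v_i}` and every vertex of `W_2` at least one: this is (c). A transfer from `v_{i+1}` lands
on an endpoint losing only its edge to `v_{i+1}`, hence on `W_1 ∪ W_2`, and on `W_1` only through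
`W_1^1`: that is (b).
-/

theorem deg_pos_of_adj {V : Type} [Finite V] {H : SimpleGraph V} {x y : V} (h : H.Adj x y) :
    0 < deg H x :=
  (Set.ncard_pos).2 ⟨y, h⟩

theorem ncard_le_deg_sub_two {V : Type} [Finite V] {H : SimpleGraph V} {x a b : V} {S : Set V}
    (hS : S ⊆ H.neighborSet x) (ha : H.Adj x a) (hb : H.Adj x b) (hab : a ≠ b)
    (haS : a ∉ S) (hbS : b ∉ S) : S.ncard ≤ deg H x - 2 := by
  have hpair : ({a, b} : Set V) ⊆ H.neighborSet x := Set.insert_subset ha (by simpa using hb)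
  have hsub : S ⊆ H.neighborSet x \ {a, b} := fun y hy =>
    ⟨hS hy, by rintro (rfl | rfl) <;> contradiction⟩
  calc S.ncard ≤ (H.neighborSet x \ {a, b}).ncard := Set.ncard_le_ncard hsub
    _ = deg H x - 2 := by rw [Set.ncard_sdiff hpair, Set.ncard_pair hab, deg]

theorem ncard_sep_add_ncard_sep {α : Type} {s : Set α} (hs : s.Finite) (p q : α → Prop) :
    {x ∈ s | p x}.ncard + {x ∈ s | q x}.ncard =
      2 * {x ∈ s | p x ∧ q x}.ncard + {x ∈ s | p x ∧ ¬q x ∨ ¬p x ∧ q x}.ncard := by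
  have hunion : {x ∈ s | p x} ∪ {x ∈ s | q x} =
      {x ∈ s | p x ∧ q x} ∪ {x ∈ s | p x ∧ ¬q x ∨ ¬p x ∧ q x} := by
    ext x; simp only [Set.mem_union, Set.mem_ofPred_eq]; tauto
  have hdisj : Disjoint {x ∈ s | p x ∧ q x} {x ∈ s | p x ∧ ¬q x ∨ ¬p x ∧ q x} :=
    Set.disjoint_left.2 fun x hx hx' => by simp only [Set.mem_ofPred_eq] at hx hx'; tauto
  have hinter : {x ∈ s | p x} ∩ {x ∈ s | q x} = {x ∈ s | p x ∧ q x} := by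
    ext x; simp only [Set.mem_inter_iff, Set.mem_ofPred_eq]; tauto
  rw [← Set.ncard_union_add_ncard_inter _ _ (hs.sep p) (hs.sep q), hunion, hinter,
    Set.ncard_union_eq hdisj (hs.sep _) (hs.sep _)]
  ring

theorem ncard_edges_to_pair {V : Type} [Finite V] {H : SimpleGraph V} {u v : V} (huv : u ≠ v)
    {W : Set V} (hu : u ∉ W) :
    {e : Sym2 V | ∃ w ∈ W, (e = s(u, w) ∨ e = s(v, w)) ∧ e ∈ H.edgeSet}.ncard =
      {w ∈ W | H.Adj u w}.ncard + {w ∈ W | H.Adj v w}.ncard := by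
  have hset : {e : Sym2 V | ∃ w ∈ W, (e = s(u, w) ∨ e = s(v, w)) ∧ e ∈ H.edgeSet} =
      (fun w => s(u, w)) '' {w ∈ W | H.Adj u w} ∪
        (fun w => s(v, w)) '' {w ∈ W | H.Adj v w} := by
    ext e
    simp only [Set.mem_ofPred_eq, Set.mem_union, Set.mem_image]
    constructor
    · rintro ⟨w, hw, rfl | rfl, he⟩
      exacts [Or.inl ⟨w, ⟨hw, he⟩, rfl⟩, Or.inr ⟨w, ⟨hw, he⟩, rfl⟩]
    · rintro (⟨w, ⟨hw, he⟩, rfl⟩ | ⟨w, ⟨hw, he⟩, rfl⟩)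
      exacts [⟨w, hw, Or.inl rfl, he⟩, ⟨w, hw, Or.inr rfl, he⟩]
  have hdisj : Disjoint ((fun w => s(u, w)) '' {w ∈ W | H.Adj u w})
      ((fun w => s(v, w)) '' {w ∈ W | H.Adj v w}) := by
    refine Set.disjoint_left.2 ?_
    rintro _ ⟨a, -, rfl⟩ ⟨b, ⟨hb, -⟩, hab⟩
    rcases Sym2.eq_iff.1 hab with ⟨h, -⟩ | ⟨-, rfl⟩
    exacts [huv h.symm, hu hb]
  have hinj (x : V) : Function.Injective fun w => s(x, w) := fun _ _ => Sym2.congr_right.1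
  rw [hset, Set.ncard_union_eq hdisj, Set.ncard_image_of_injective _ (hinj u),
    Set.ncard_image_of_injective _ (hinj v)]

namespace GreedyExec

variable {V : Type} {G : SimpleGraph V} (E : GreedyExec V G)

theorem adj_succ_iff {j : ℕ} (hj : j < E.k) {x y : V} :
    (E.Gs (j + 1)).Adj x y ↔ (E.Gs j).Adj x y ∧
      x ≠ E.sel j ∧ x ≠ E.oth j ∧ y ≠ E.sel j ∧ y ≠ E.oth j := by
  rw [E.step j hj, SimpleGraph.fromEdgeSet_adj]
  simp only [Set.mem_ofPred_eq, SimpleGraph.mem_edgeSet, Sym2.mem_iff, not_or]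
  constructor
  · rintro ⟨⟨h, ⟨h1, h3⟩, h2, h4⟩, -⟩
    exact ⟨h, Ne.symm h1, Ne.symm h2, Ne.symm h3, Ne.symm h4⟩
  · rintro ⟨h, h1, h2, h3, h4⟩
    exact ⟨⟨h, ⟨h1.symm, h3.symm⟩, h2.symm, h4.symm⟩, h.ne⟩

theorem Gs_anti {a b : ℕ} (hab : a ≤ b) (hb : b ≤ E.k) : E.Gs b ≤ E.Gs a := by
  induction b, hab using Nat.le_induction with
  | base => exact le_rfl
  | succ b _ ih =>
    exact fun x y h => ih (by omega) ((E.adj_succ_iff (by omega)).1 h).1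

theorem deg_anti [Finite V] {a b : ℕ} (hab : a ≤ b) (hb : b ≤ E.k) (x : V) :
    deg (E.Gs b) x ≤ deg (E.Gs a) x :=
  Set.ncard_le_ncard fun _ h => E.Gs_anti hab hb h

theorem adj_of_adj_Gs {j : ℕ} (hj : j ≤ E.k) {x y : V} (h : (E.Gs j).Adj x y) : G.Adj x y := by
  simpa only [E.init] using E.Gs_anti (Nat.zero_le j) hj h

theorem deg_Gs_le [Finite V] {j : ℕ} (hj : j ≤ E.k) (x : V) :
    deg (E.Gs j) x ≤ deg G x := by
  simpa only [E.init] using E.deg_anti (Nat.zero_le j) hj x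

theorem exists_adj_of_matchedAt {j : ℕ} {x : V} (hx : matchedAt E j x) :
    ∃ y, (E.Gs j).Adj x y := by
  rcases hx with ⟨hj, rfl | rfl⟩
  exacts [⟨_, E.adj j hj⟩, ⟨_, (E.adj j hj).symm⟩]

theorem not_adj_of_matchedAt {j j' : ℕ} {x : V} (hx : matchedAt E j x) (hjj' : j < j')
    (hj' : j' ≤ E.k) (y : V) : ¬(E.Gs j').Adj x y := fun h => by
  have := ((E.adj_succ_iff hx.1).1 (E.Gs_anti hjj' hj' h)).2
  rcases hx.2 with rfl | rfl
  exacts [this.1 rfl, this.2.1 rfl]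

theorem matchedAt_unique {j j' : ℕ} {x : V} (hx : matchedAt E j x) (hx' : matchedAt E j' x) :
    j = j' := by
  by_contra hne
  rcases Nat.lt_or_gt_of_ne hne with h | h
  · obtain ⟨y, hy⟩ := E.exists_adj_of_matchedAt hx'
    exact E.not_adj_of_matchedAt hx h hx'.1.le y hy
  · obtain ⟨y, hy⟩ := E.exists_adj_of_matchedAt hx
    exact E.not_adj_of_matchedAt hx' h hx.1.le y hy

theorem adj_of_not_matchedAt {n : ℕ} (hn : n ≤ E.k) {x y : V} (h : G.Adj x y)
    (hx : ∀ j < n, ¬matchedAt E j x) (hy : ∀ j < n, ¬matchedAt E j y) : (E.Gs n).Adj x y := by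
  induction n with
  | zero => rwa [E.init]
  | succ n ih =>
    have hn' : n < E.k := by omega
    refine (E.adj_succ_iff hn').2 ⟨ih hn'.le (fun j hj => hx j (by omega))
      (fun j hj => hy j (by omega)), ?_, ?_, ?_, ?_⟩ <;> rintro rfl
    exacts [hx n (by omega) ⟨hn', Or.inl rfl⟩, hx n (by omega) ⟨hn', Or.inr rfl⟩,
      hy n (by omega) ⟨hn', Or.inl rfl⟩, hy n (by omega) ⟨hn', Or.inr rfl⟩]

theorem neighborSet_succ {j : ℕ} (hj : j < E.k) {w : V} (hws : w ≠ E.sel j)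
    (hwo : w ≠ E.oth j) :
    (E.Gs (j + 1)).neighborSet w = (E.Gs j).neighborSet w \ {E.sel j, E.oth j} := by
  ext y
  simp only [SimpleGraph.mem_neighborSet, Set.mem_sdiff, Set.mem_insert_iff,
    Set.mem_singleton_iff, E.adj_succ_iff hj, not_or]
  tauto

open Classical in
theorem deg_eq_deg_succ_add [Finite V] {j : ℕ} (hj : j < E.k) {w : V} (hws : w ≠ E.sel j)
    (hwo : w ≠ E.oth j) :
    deg (E.Gs j) w = deg (E.Gs (j + 1)) w +
      ((if (E.Gs j).Adj w (E.sel j) then 1 else 0) +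
        if (E.Gs j).Adj w (E.oth j) then 1 else 0) := by
  have hso : E.sel j ≠ E.oth j := (E.adj j hj).ne
  rw [deg, deg, E.neighborSet_succ hj hws hwo,
    ← Set.ncard_inter_add_ncard_sdiff_eq_ncard ((E.Gs j).neighborSet w) {E.sel j, E.oth j},
    add_comm, Set.inter_comm]
  congr 1
  by_cases hs : (E.Gs j).Adj w (E.sel j) <;> by_cases ho : (E.Gs j).Adj w (E.oth j) <;>
    simp [Set.insert_inter_of_mem, Set.insert_inter_of_notMem, hs, ho, hso]

theorem deg_le_deg_succ_add_two [Finite V] {j : ℕ} (hj : j < E.k) {w : V} (hws : w ≠ E.sel j)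
    (hwo : w ≠ E.oth j) : deg (E.Gs j) w ≤ deg (E.Gs (j + 1)) w + 2 := by
  rw [E.deg_eq_deg_succ_add hj hws hwo]
  split_ifs <;> omega

theorem adj_sel_and_oth_of_deg_drop [Finite V] {j : ℕ} (hj : j < E.k) {w : V}
    (hws : w ≠ E.sel j) (hwo : w ≠ E.oth j) (h : deg (E.Gs (j + 1)) w + 2 ≤ deg (E.Gs j) w) :
    (E.Gs j).Adj w (E.sel j) ∧ (E.Gs j).Adj w (E.oth j) := by
  rw [E.deg_eq_deg_succ_add hj hws hwo] at h
  split_ifs at h with hs ho <;> first | exact ⟨hs, ho⟩ | omega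

theorem adj_sel_or_oth_of_deg_lt [Finite V] {j : ℕ} (hj : j < E.k) {w : V}
    (hws : w ≠ E.sel j) (hwo : w ≠ E.oth j) (h : deg (E.Gs (j + 1)) w < deg (E.Gs j) w) :
    (E.Gs j).Adj w (E.sel j) ∨ (E.Gs j).Adj w (E.oth j) := by
  by_contra! hc
  rw [E.deg_eq_deg_succ_add hj hws hwo, if_neg hc.1, if_neg hc.2] at h
  omega

theorem lt_k_of_deg_pos [Finite V] {j : ℕ} (hj : j ≤ E.k) {w : V} (h : 0 < deg (E.Gs j) w) :
    j < E.k := by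
  refine lt_of_le_of_ne hj fun hjk => ?_
  obtain ⟨y, hy⟩ := (Set.ncard_pos).1 h
  have hmem : s(w, y) ∈ (E.Gs j).edgeSet := hy
  simp [hjk, E.final] at hmem

namespace Is12MinGreedy

variable {E}

theorem deg_eq_zero_or_three_le (h12 : E.Is12MinGreedy) {i : ℕ} (hi : i < E.k)
    (hsel : 3 ≤ deg (E.Gs i) (E.sel i)) (x : V) :
    deg (E.Gs i) x = 0 ∨ 3 ≤ deg (E.Gs i) x := by
  by_contra! hx
  have := h12 i hi ⟨x, by omega⟩ x (by omega)
  omega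

theorem neighborSet_sel_eq_singleton [Finite V] (h12 : E.Is12MinGreedy) {j : ℕ}
    (hj : j < E.k) {w : V} (hw : deg (E.Gs j) w = 1) :
    (E.Gs j).neighborSet (E.sel j) = {E.oth j} := by
  have hpos := deg_pos_of_adj (E.adj j hj)
  have hle := h12 j hj ⟨w, Or.inl hw⟩ w (by omega)
  obtain ⟨a, ha⟩ := Set.ncard_eq_one.1 (show deg (E.Gs j) (E.sel j) = 1 by omega)
  have hoth : E.oth j ∈ (E.Gs j).neighborSet (E.sel j) := E.adj j hj
  rw [ha] at hoth ⊢
  rw [Set.mem_singleton_iff.1 hoth]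

end Is12MinGreedy

end GreedyExec

namespace IsPathEndpoint

variable {V : Type} {G : SimpleGraph V} {E : GreedyExec V G} {M Mopt : Set (Sym2 V)} {w : V}

theorem not_mem (hw : IsPathEndpoint M Mopt w) {e : Sym2 V} (he : e ∈ M) : w ∉ e := by
  obtain ⟨m, p, hp, rfl | rfl⟩ := hw
  exacts [(hp.2.2 e he).1, (hp.2.2 e he).2]

theorem not_matchedAt (hw : IsPathEndpoint E.M Mopt w) (j : ℕ) : ¬matchedAt E j w := by
  rintro ⟨hj, hwj⟩
  exact hw.not_mem ⟨j, hj, rfl⟩ (Sym2.mem_iff.2 hwj)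

theorem ne_sel_oth (hw : IsPathEndpoint E.M Mopt w) {i : ℕ} (hi : i < E.k) :
    w ≠ E.sel i ∧ w ≠ E.oth i :=
  ⟨fun h => hw.not_matchedAt i ⟨hi, Or.inl h⟩,
    fun h => hw.not_matchedAt i ⟨hi, Or.inr h⟩⟩

end IsPathEndpoint

section Transfers

variable {V : Type} {G : SimpleGraph V} (E : GreedyExec V G) (M Mopt : Set (Sym2 V))

theorem FEdge_comm {x y : V} : FEdge G M Mopt x y ↔ FEdge G M Mopt y x := by
  rw [FEdge, FEdge, Sym2.eq_swap]

theorem uncanceledAt_iff (i : ℕ) (v w : V) :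
    uncanceledAt E M Mopt i v w ↔
    transferAt E M Mopt i v w ∧
    ¬(deg (E.Gs i) w = 1 ∧ (E.Gs i).Adj v w ∧
      ∃ (j₁ : ℕ) (_ : j₁ < i) (v₁ : V) (j₂ : ℕ) (_ : j₂ < i) (v₂ : V),
        uncanceledAt E M Mopt j₁ v₁ w ∧ uncanceledAt E M Mopt j₂ v₂ w ∧
        (j₁, v₁) ≠ (j₂, v₂)) := by
  unfold uncanceledAt
  rw [Nat.strongRecOn_eq]

variable {E M Mopt}

theorem uncanceledAt_of_transferAt {i : ℕ} {v w : V} (h : transferAt E M Mopt i v w)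
    (hw : deg (E.Gs i) w ≠ 1) : uncanceledAt E M Mopt i v w :=
  (uncanceledAt_iff E M Mopt i v w).2 ⟨h, fun hc => hw hc.1⟩

theorem isTransfer_iff_transferAt {i : ℕ} {x w : V} (hx : matchedAt E i x) :
    IsTransfer E M Mopt x w ↔ transferAt E M Mopt i x w :=
  ⟨fun ⟨_, hj⟩ => E.matchedAt_unique hj.2.2.1 hx ▸ hj, fun h => ⟨i, h⟩⟩

theorem ne_of_matchedAt {i j : ℕ} {x y : V} (hx : matchedAt E i x) (hy : matchedAt E j y)
    (hij : i ≠ j) : x ≠ y := by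
  rintro rfl
  exact hij (E.matchedAt_unique hx hy)

theorem adj_of_matchedAt_of_isPathEndpoint {i : ℕ} {x w : V} (hx : matchedAt E i x)
    (hw : IsPathEndpoint E.M Mopt w) (h : G.Adj x w) : (E.Gs i).Adj x w :=
  E.adj_of_not_matchedAt hx.1.le h (fun _ hj hxj => hj.ne (E.matchedAt_unique hxj hx))
    (fun j _ => hw.not_matchedAt j)

theorem FEdge_or_FEdge_of_isMatchingSet {w u v : V} (hMopt : IsMatchingSet G Mopt)
    (hw : ∀ e ∈ M, w ∉ e) (hu : G.Adj w u) (hv : G.Adj w v) (huv : u ≠ v) :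
    FEdge G M Mopt w u ∨ FEdge G M Mopt w v := by
  by_contra! h
  have hMu : s(w, u) ∈ Mopt := by
    by_contra hMu; exact h.1 ⟨hu, fun he => hw _ he (Sym2.mem_mk_left _ _), hMu⟩
  have hMv : s(w, v) ∈ Mopt := by
    by_contra hMv; exact h.2 ⟨hv, fun he => hw _ he (Sym2.mem_mk_left _ _), hMv⟩
  exact hMopt.2 _ hMu _ hMv (fun he => huv (Sym2.congr_right.1 he)) w (Sym2.mem_mk_left _ _)
    (Sym2.mem_mk_left _ _)

end Transfers

/-- The paper's `W`, `W_d` (for `d = 1, 2`), `W_1^1`, `W_1^2` and `E(W)`. Steps are numbered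
from `0` here, so `E.Gs i` and `E.Gs (i + 1)` are the paper's `G_{i-1}` and `G_i`. -/
def nearEndpoints {V : Type} {G : SimpleGraph V} (E : GreedyExec V G) (Mopt : Set (Sym2 V))
    (i : ℕ) : Set V :=
  {w | IsPathEndpoint E.M Mopt w ∧
    ((E.Gs i).Adj w (E.sel i) ∨ (E.Gs i).Adj w (E.oth i)) ∧ 3 ≤ deg (E.Gs i) w}

def nearEndpointsDeg {V : Type} {G : SimpleGraph V} (E : GreedyExec V G) (Mopt : Set (Sym2 V))
    (i d : ℕ) : Set V :=
  {w ∈ nearEndpoints E Mopt i | deg (E.Gs (i + 1)) w = d}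

def nearEndpointsOneF {V : Type} {G : SimpleGraph V} (E : GreedyExec V G) (Mopt : Set (Sym2 V))
    (i : ℕ) : Set V :=
  {w ∈ nearEndpointsDeg E Mopt i 1 |
    (FEdge G E.M Mopt w (E.sel i) ∧ ¬FEdge G E.M Mopt w (E.oth i)) ∨
    (¬FEdge G E.M Mopt w (E.sel i) ∧ FEdge G E.M Mopt w (E.oth i))}

def nearEndpointsTwoF {V : Type} {G : SimpleGraph V} (E : GreedyExec V G) (Mopt : Set (Sym2 V))
    (i : ℕ) : Set V :=
  {w ∈ nearEndpointsDeg E Mopt i 1 |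
    FEdge G E.M Mopt w (E.sel i) ∧ FEdge G E.M Mopt w (E.oth i)}

def nearEndpointEdges {V : Type} {G : SimpleGraph V} (E : GreedyExec V G) (Mopt : Set (Sym2 V))
    (i : ℕ) : Set (Sym2 V) :=
  {e | ∃ w ∈ nearEndpoints E Mopt i,
    (e = s(E.sel i, w) ∨ e = s(E.oth i, w)) ∧ e ∈ (E.Gs i).edgeSet}

section CreationStep

variable {V : Type} [Finite V] {G : SimpleGraph V} {E : GreedyExec V G} {Mopt : Set (Sym2 V)}
  {i : ℕ}

theorem adj_sel_and_oth_of_mem_nearEndpointsDeg_one (hi : i < E.k) {w : V}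
    (hw : w ∈ nearEndpointsDeg E Mopt i 1) :
    (E.Gs i).Adj w (E.sel i) ∧ (E.Gs i).Adj w (E.oth i) :=
  E.adj_sel_and_oth_of_deg_drop hi (hw.1.1.ne_sel_oth hi).1 (hw.1.1.ne_sel_oth hi).2
    (by rw [hw.2]; exact hw.1.2.2)

theorem isTransfer_iff_of_matchedAt (hi : i < E.k)
    (hmin : ∀ x, deg (E.Gs i) x = 0 ∨ 3 ≤ deg (E.Gs i) x) {x w : V} (hx : matchedAt E i x) :
    IsTransfer E E.M Mopt x w ↔ w ∈ nearEndpointsDeg E Mopt i 1 ∧ FEdge G E.M Mopt w x := by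
  rw [isTransfer_iff_transferAt hx]
  constructor
  · rintro ⟨hF, hw, -, hdeg⟩
    have hxw := adj_of_matchedAt_of_isPathEndpoint hx hw hF.1
    have hd3 : 3 ≤ deg (E.Gs i) w := (hmin w).resolve_left (deg_pos_of_adj hxw.symm).ne'
    have hdrop := E.deg_le_deg_succ_add_two hi (hw.ne_sel_oth hi).1 (hw.ne_sel_oth hi).2
    have hnear : (E.Gs i).Adj w (E.sel i) ∨ (E.Gs i).Adj w (E.oth i) := by
      rcases hx.2 with rfl | rfl
      exacts [Or.inl hxw.symm, Or.inr hxw.symm]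
    exact ⟨⟨⟨hw, hnear, hd3⟩, by omega⟩, (FEdge_comm _ _).1 hF⟩
  · rintro ⟨hw, hF⟩
    exact ⟨(FEdge_comm _ _).1 hF, hw.1.1, hx, hw.2.le⟩

theorem ncard_transfers_from_sel_oth (hi : i < E.k)
    (hmin : ∀ x, deg (E.Gs i) x = 0 ∨ 3 ≤ deg (E.Gs i) x) :
    {q : V × V | IsTransfer E E.M Mopt q.1 q.2 ∧ (q.1 = E.sel i ∨ q.1 = E.oth i)}.ncard =
      2 * (nearEndpointsTwoF E Mopt i).ncard +
        (nearEndpointsOneF E Mopt i).ncard := by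
  have hset : {q : V × V | IsTransfer E E.M Mopt q.1 q.2 ∧ (q.1 = E.sel i ∨ q.1 = E.oth i)} =
      {E.sel i} ×ˢ {w ∈ nearEndpointsDeg E Mopt i 1 | FEdge G E.M Mopt w (E.sel i)} ∪
        {E.oth i} ×ˢ {w ∈ nearEndpointsDeg E Mopt i 1 | FEdge G E.M Mopt w (E.oth i)} := by
    ext ⟨x, w⟩
    simp only [Set.mem_ofPred_eq, Set.mem_union, Set.mem_prod, Set.mem_singleton_iff]
    constructor
    · rintro ⟨h, rfl | rfl⟩
      exacts [Or.inl ⟨rfl, (isTransfer_iff_of_matchedAt hi hmin ⟨hi, Or.inl rfl⟩).1 h⟩,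
        Or.inr ⟨rfl, (isTransfer_iff_of_matchedAt hi hmin ⟨hi, Or.inr rfl⟩).1 h⟩]
    · rintro (⟨rfl, h⟩ | ⟨rfl, h⟩)
      exacts [⟨(isTransfer_iff_of_matchedAt hi hmin ⟨hi, Or.inl rfl⟩).2 h, Or.inl rfl⟩,
        ⟨(isTransfer_iff_of_matchedAt hi hmin ⟨hi, Or.inr rfl⟩).2 h, Or.inr rfl⟩]
  have hdisj : Disjoint
      ({E.sel i} ×ˢ {w ∈ nearEndpointsDeg E Mopt i 1 | FEdge G E.M Mopt w (E.sel i)})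
      ({E.oth i} ×ˢ {w ∈ nearEndpointsDeg E Mopt i 1 | FEdge G E.M Mopt w (E.oth i)}) :=
    Set.disjoint_prod.2 (Or.inl (Set.disjoint_singleton.2 (E.adj i hi).ne))
  rw [hset, Set.ncard_union_eq hdisj, Set.ncard_prod, Set.ncard_prod, Set.ncard_singleton,
    Set.ncard_singleton, one_mul, one_mul]
  exact ncard_sep_add_ncard_sep (Set.toFinite _) _ _

theorem adj_sel_succ (hi : i + 1 < E.k) (hmin : ∀ x, deg (E.Gs i) x = 0 ∨ 3 ≤ deg (E.Gs i) x)
    (ht : (E.Gs (i + 1)).neighborSet (E.sel (i + 1)) = {E.oth (i + 1)}) :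
    (E.Gs i).Adj (E.sel (i + 1)) (E.sel i) ∧ (E.Gs i).Adj (E.sel (i + 1)) (E.oth i) := by
  have hmt : matchedAt E (i + 1) (E.sel (i + 1)) := ⟨hi, Or.inl rfl⟩
  have hdeg1 : deg (E.Gs (i + 1)) (E.sel (i + 1)) = 1 := by rw [deg, ht, Set.ncard_singleton]
  have hik : i < E.k := by omega
  have hanti : deg (E.Gs (i + 1)) (E.sel (i + 1)) ≤ deg (E.Gs i) (E.sel (i + 1)) :=
    E.deg_anti (Nat.le_succ i) hi.le _
  have hd3 := (hmin (E.sel (i + 1))).resolve_left (by omega)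
  exact E.adj_sel_and_oth_of_deg_drop hik
    (ne_of_matchedAt hmt ⟨hik, Or.inl rfl⟩ (Nat.succ_ne_self i))
    (ne_of_matchedAt hmt ⟨hik, Or.inr rfl⟩ (Nat.succ_ne_self i)) (by omega)

theorem ncard_nearEndpointEdges (hi : i < E.k) :
    (nearEndpointEdges E Mopt i).ncard =
      {w ∈ nearEndpoints E Mopt i | (E.Gs i).Adj (E.sel i) w}.ncard +
        {w ∈ nearEndpoints E Mopt i | (E.Gs i).Adj (E.oth i) w}.ncard :=
  ncard_edges_to_pair (E.adj i hi).ne fun hw => (hw.1.ne_sel_oth hi).1 rfl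

theorem le_ncard_nearEndpointEdges (hi : i < E.k) :
    2 * (nearEndpointsTwoF E Mopt i).ncard + 2 * (nearEndpointsOneF E Mopt i).ncard +
      (nearEndpointsDeg E Mopt i 2).ncard ≤ (nearEndpointEdges E Mopt i).ncard := by
  rw [ncard_nearEndpointEdges hi, ← Set.ncard_union_add_ncard_inter]
  set W := nearEndpoints E Mopt i
  set W₁ := nearEndpointsDeg E Mopt i 1
  set A := {w ∈ W | (E.Gs i).Adj (E.sel i) w}
  set B := {w ∈ W | (E.Gs i).Adj (E.oth i) w}
  have hAB : A ∪ B = W := by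
    ext w
    simp only [A, B, W, nearEndpoints, Set.mem_union, Set.mem_ofPred_eq, SimpleGraph.adj_comm]
    tauto
  have hW₁ : W₁ ⊆ A ∩ B := fun w hw =>
    ⟨⟨hw.1, (adj_sel_and_oth_of_mem_nearEndpointsDeg_one hi hw).1.symm⟩,
      ⟨hw.1, (adj_sel_and_oth_of_mem_nearEndpointsDeg_one hi hw).2.symm⟩⟩
  have hsplitW : W₁.ncard + (nearEndpointsDeg E Mopt i 2).ncard ≤ W.ncard := by
    rw [← Set.ncard_union_eq (Set.disjoint_left.2 fun w h₁ h₂ => by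
      have := h₁.2.symm.trans h₂.2; omega)]
    exact Set.ncard_le_ncard (Set.union_subset (fun w hw => hw.1) fun w hw => hw.1)
  have hsplitW₁ :
      (nearEndpointsTwoF E Mopt i).ncard + (nearEndpointsOneF E Mopt i).ncard ≤ W₁.ncard := by
    rw [← Set.ncard_union_eq (Set.disjoint_left.2 fun w h₁ h₂ => by
      simp only [nearEndpointsTwoF, nearEndpointsOneF, Set.mem_ofPred_eq] at h₁ h₂; tauto)]
    exact Set.ncard_le_ncard (Set.union_subset (fun w hw => hw.1) fun w hw => hw.1)
  have hinter := Set.ncard_le_ncard hW₁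
  rw [hAB]
  omega

theorem ncard_nearEndpointEdges_le {Δ : ℕ} (hΔ : maxDegLE G Δ) (hi : i + 1 < E.k)
    (hmin : ∀ x, deg (E.Gs i) x = 0 ∨ 3 ≤ deg (E.Gs i) x)
    (ht : (E.Gs (i + 1)).neighborSet (E.sel (i + 1)) = {E.oth (i + 1)}) :
    (nearEndpointEdges E Mopt i).ncard ≤ 2 * (Δ - 2) := by
  have hik : i < E.k := by omega
  have huv := E.adj i hik
  have ⟨htu, htv⟩ := adj_sel_succ hi hmin ht
  have hnot_t : E.sel (i + 1) ∉ nearEndpoints E Mopt i := fun h =>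
    h.1.not_matchedAt (i + 1) ⟨hi, Or.inl rfl⟩
  have hsel : {w ∈ nearEndpoints E Mopt i | (E.Gs i).Adj (E.sel i) w}.ncard ≤
      deg (E.Gs i) (E.sel i) - 2 :=
    ncard_le_deg_sub_two (fun _ hw => hw.2) huv htu.symm htv.ne.symm
      (fun h => (h.1.1.ne_sel_oth hik).2 rfl) (fun h => hnot_t h.1)
  have hoth : {w ∈ nearEndpoints E Mopt i | (E.Gs i).Adj (E.oth i) w}.ncard ≤
      deg (E.Gs i) (E.oth i) - 2 :=
    ncard_le_deg_sub_two (fun _ hw => hw.2) huv.symm htv.symm htu.ne.symm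
      (fun h => (h.1.1.ne_sel_oth hik).1 rfl) (fun h => hnot_t h.1)
  have := E.deg_Gs_le hik.le (E.sel i)
  have := E.deg_Gs_le hik.le (E.oth i)
  have := hΔ (E.sel i)
  have := hΔ (E.oth i)
  rw [ncard_nearEndpointEdges hik]
  omega

theorem mem_nearEndpointsDeg_of_transferAt_succ (hi : i + 1 < E.k)
    (hmin : ∀ x, deg (E.Gs i) x = 0 ∨ 3 ≤ deg (E.Gs i) x)
    (ht : (E.Gs (i + 1)).neighborSet (E.sel (i + 1)) = {E.oth (i + 1)}) {w : V}
    (h : transferAt E E.M Mopt (i + 1) (E.oth (i + 1)) w) :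
    w ∈ nearEndpointsDeg E Mopt i 1 ∨ w ∈ nearEndpointsDeg E Mopt i 2 := by
  obtain ⟨hF, hw, hv', hdeg⟩ := h
  have hik : i < E.k := by omega
  have hadj := adj_of_matchedAt_of_isPathEndpoint hv' hw hF.1
  obtain ⟨hwt, hwv'⟩ := hw.ne_sel_oth hi
  have hnt : ¬(E.Gs (i + 1)).Adj w (E.sel (i + 1)) := fun h => by
    have hmem : w ∈ (E.Gs (i + 1)).neighborSet (E.sel (i + 1)) := h.symm
    rw [ht] at hmem
    exact hwv' hmem
  have hdrop : deg (E.Gs (i + 1)) w = deg (E.Gs (i + 1 + 1)) w + 1 := by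
    rw [E.deg_eq_deg_succ_add hi hwt hwv', if_neg hnt, if_pos hadj.symm]
  have hanti : deg (E.Gs (i + 1)) w ≤ deg (E.Gs i) w := E.deg_anti (Nat.le_succ i) hi.le w
  have hd3 : 3 ≤ deg (E.Gs i) w := (hmin w).resolve_left (by omega)
  obtain ⟨hwu, hwv⟩ := hw.ne_sel_oth hik
  rcases (by omega : deg (E.Gs (i + 1)) w = 1 ∨ deg (E.Gs (i + 1)) w = 2) with h1 | h2
  · have hboth := E.adj_sel_and_oth_of_deg_drop hik hwu hwv (by omega)
    exact Or.inl ⟨⟨hw, Or.inl hboth.1, hd3⟩, h1⟩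
  · exact Or.inr ⟨⟨hw, E.adj_sel_or_oth_of_deg_lt hik hwu hwv (by omega), hd3⟩, h2⟩

/-- Both edges `wu_i`, `wv_i` lying in `F` would give two uncanceled transfers into `w`, and
then the transfer along `w`'s last edge `wv_{i+1}` would be canceled; both lying in `M*`
contradicts `M*` being a matching. -/
theorem FEdge_xor_of_uncanceledAt_succ (hMopt : IsMatchingSet G Mopt) (hi : i + 1 < E.k)
    {w : V} (hw : w ∈ nearEndpointsDeg E Mopt i 1)
    (h : uncanceledAt E E.M Mopt (i + 1) (E.oth (i + 1)) w) :
    (FEdge G E.M Mopt w (E.sel i) ∧ ¬FEdge G E.M Mopt w (E.oth i)) ∨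
      (¬FEdge G E.M Mopt w (E.sel i) ∧ FEdge G E.M Mopt w (E.oth i)) := by
  obtain ⟨htr, hnc⟩ := (uncanceledAt_iff E E.M Mopt _ _ _).1 h
  have hik : i < E.k := by omega
  obtain ⟨hau, hav⟩ := adj_sel_and_oth_of_mem_nearEndpointsDeg_one hik hw
  have hsome := FEdge_or_FEdge_of_isMatchingSet hMopt (fun _ he => hw.1.1.not_mem he)
    (E.adj_of_adj_Gs hik.le hau) (E.adj_of_adj_Gs hik.le hav) (E.adj i hik).ne
  have hunc {x : V} (hx : matchedAt E i x) (hF : FEdge G E.M Mopt w x) :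
      uncanceledAt E E.M Mopt i x w :=
    uncanceledAt_of_transferAt ⟨(FEdge_comm _ _).1 hF, hw.1.1, hx, hw.2.le⟩
      (by have := hw.1.2.2; omega)
  have hnotboth : ¬(FEdge G E.M Mopt w (E.sel i) ∧ FEdge G E.M Mopt w (E.oth i)) :=
    fun ⟨hFu, hFv⟩ => hnc ⟨hw.2, adj_of_matchedAt_of_isPathEndpoint htr.2.2.1 hw.1.1 htr.1.1,
      i, i.lt_succ_self, _, i, i.lt_succ_self, _, hunc ⟨hik, Or.inl rfl⟩ hFu,
      hunc ⟨hik, Or.inr rfl⟩ hFv, fun h => (E.adj i hik).ne (congrArg Prod.snd h)⟩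
  tauto

theorem ncard_uncanceled_from_oth_succ_le (hMopt : IsMatchingSet G Mopt) (hi : i + 1 < E.k)
    (hmin : ∀ x, deg (E.Gs i) x = 0 ∨ 3 ≤ deg (E.Gs i) x)
    (ht : (E.Gs (i + 1)).neighborSet (E.sel (i + 1)) = {E.oth (i + 1)}) :
    {q : V × V | IsUncanceledTransfer E E.M Mopt q.1 q.2 ∧ q.1 = E.oth (i + 1)}.ncard ≤
      (nearEndpointsOneF E Mopt i).ncard + (nearEndpointsDeg E Mopt i 2).ncard := by
  have hsub : {q : V × V | IsUncanceledTransfer E E.M Mopt q.1 q.2 ∧ q.1 = E.oth (i + 1)} ⊆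
      {E.oth (i + 1)} ×ˢ (nearEndpointsOneF E Mopt i ∪ nearEndpointsDeg E Mopt i 2) := by
    rintro ⟨x, w⟩ ⟨⟨j, h⟩, rfl : x = E.oth (i + 1)⟩
    have htr := ((uncanceledAt_iff E E.M Mopt _ _ _).1 h).1
    obtain rfl : j = i + 1 := E.matchedAt_unique htr.2.2.1 ⟨hi, Or.inr rfl⟩
    refine ⟨rfl, ?_⟩
    rcases mem_nearEndpointsDeg_of_transferAt_succ hi hmin ht htr with h₁ | h₂
    exacts [Or.inl ⟨h₁, FEdge_xor_of_uncanceledAt_succ hMopt hi h₁ h⟩, Or.inr h₂]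
  calc _ ≤ _ := Set.ncard_le_ncard hsub
    _ = (nearEndpointsOneF E Mopt i ∪ nearEndpointsDeg E Mopt i 2).ncard := by
      rw [Set.ncard_prod, Set.ncard_singleton, one_mul]
    _ ≤ _ := Set.ncard_union_le _ _

end CreationStep

theorem deg3_creation_coin_bounds_general {V : Type} [Fintype V] (Δ : ℕ)
    (G : SimpleGraph V) (hdeg : maxDegLE G Δ)
    (E : GreedyExec V G) (h12 : E.Is12MinGreedy)
    (Mopt : Set (Sym2 V)) (hnf : NormalForm G E.M Mopt)
    (m : ℕ) (p : ℕ → V)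
    (i : ℕ) (hc : creationStep E (pathSupp m p) i)
    (hdu : 3 ≤ deg (E.Gs i) (E.sel i))
    (hd1 : Deg1EndpointAfter E E.M Mopt i)
    (W W1 W2 W11 W12 : Set V) (EW : Set (Sym2 V))
    (hW : W = {w : V | IsPathEndpoint E.M Mopt w ∧
      ((E.Gs i).Adj w (E.sel i) ∨ (E.Gs i).Adj w (E.oth i)) ∧ 3 ≤ deg (E.Gs i) w})
    (hW1 : W1 = {w ∈ W | deg (E.Gs (i + 1)) w = 1})
    (hW2 : W2 = {w ∈ W | deg (E.Gs (i + 1)) w = 2})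
    (hW11 : W11 = {w ∈ W1 |
      (FEdge G E.M Mopt w (E.sel i) ∧ ¬FEdge G E.M Mopt w (E.oth i)) ∨
      (¬FEdge G E.M Mopt w (E.sel i) ∧ FEdge G E.M Mopt w (E.oth i))})
    (hW12 : W12 = {w ∈ W1 | FEdge G E.M Mopt w (E.sel i) ∧ FEdge G E.M Mopt w (E.oth i)})
    (hEW : EW = {e : Sym2 V | ∃ w ∈ W,
      (e = s(E.sel i, w) ∨ e = s(E.oth i, w)) ∧ e ∈ (E.Gs i).edgeSet}) :
    ({q : V × V | IsTransfer E E.M Mopt q.1 q.2 ∧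
        (q.1 = E.sel i ∨ q.1 = E.oth i)}.ncard = 2 * W12.ncard + W11.ncard) ∧
    ({q : V × V | IsUncanceledTransfer E E.M Mopt q.1 q.2 ∧
        q.1 = E.oth (i + 1)}.ncard ≤ W11.ncard + W2.ncard) ∧
    (2 * W12.ncard + 2 * W11.ncard + W2.ncard ≤ EW.ncard ∧ EW.ncard ≤ 2 * (Δ - 2)) := by
  subst hW hW1 hW2 hW11 hW12 hEW
  have hik : i < E.k := hc.1
  have hmin := h12.deg_eq_zero_or_three_le hik hdu
  obtain ⟨-, w₀, -, -, hw₀⟩ := hd1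
  have hik' : i + 1 < E.k := E.lt_k_of_deg_pos hik (by omega : 0 < deg (E.Gs (i + 1)) w₀)
  have ht := h12.neighborSet_sel_eq_singleton hik' hw₀
  exact ⟨ncard_transfers_from_sel_oth hik hmin,
    ncard_uncanceled_from_oth_succ_le hnf.1.1 hik' hmin ht,
    le_ncard_nearEndpointEdges hik, ncard_nearEndpointEdges_le hdeg hik' hmin ht⟩

/-- the degree-≥3 creation step case, with the endpoint sets
W, W₁, W₂, W₁¹, W₁² and the edge set E(W). -/
theorem deg3_creation_coin_bounds {V : Type} [Fintype V] (Δ : ℕ) (hΔ : 4 ≤ Δ)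
    (G : SimpleGraph V) (hdeg : maxDegLE G Δ)
    (E : GreedyExec V G) (h12 : E.Is12MinGreedy)
    (Mopt : Set (Sym2 V)) (hnf : NormalForm G E.M Mopt)
    (m : ℕ) (p : ℕ → V) (hp : IsAugPath E.M Mopt m p)
    (i : ℕ) (hc : creationStep E (pathSupp m p) i)
    (hdu : 3 ≤ deg (E.Gs i) (E.sel i))
    (hd1 : Deg1EndpointAfter E E.M Mopt i)
    (W W1 W2 W11 W12 : Set V) (EW : Set (Sym2 V))
    (hW : W = {w : V | IsPathEndpoint E.M Mopt w ∧
      ((E.Gs i).Adj w (E.sel i) ∨ (E.Gs i).Adj w (E.oth i)) ∧ 3 ≤ deg (E.Gs i) w})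
    (hW1 : W1 = {w ∈ W | deg (E.Gs (i + 1)) w = 1})
    (hW2 : W2 = {w ∈ W | deg (E.Gs (i + 1)) w = 2})
    (hW11 : W11 = {w ∈ W1 |
      (FEdge G E.M Mopt w (E.sel i) ∧ ¬FEdge G E.M Mopt w (E.oth i)) ∨
      (¬FEdge G E.M Mopt w (E.sel i) ∧ FEdge G E.M Mopt w (E.oth i))})
    (hW12 : W12 = {w ∈ W1 | FEdge G E.M Mopt w (E.sel i) ∧ FEdge G E.M Mopt w (E.oth i)})
    (hEW : EW = {e : Sym2 V | ∃ w ∈ W,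
      (e = s(E.sel i, w) ∨ e = s(E.oth i, w)) ∧ e ∈ (E.Gs i).edgeSet}) :
    ({q : V × V | IsTransfer E E.M Mopt q.1 q.2 ∧
        (q.1 = E.sel i ∨ q.1 = E.oth i)}.ncard = 2 * W12.ncard + W11.ncard) ∧
    ({q : V × V | IsUncanceledTransfer E E.M Mopt q.1 q.2 ∧
        q.1 = E.oth (i + 1)}.ncard ≤ W11.ncard + W2.ncard) ∧
    (2 * W12.ncard + 2 * W11.ncard + W2.ncard ≤ EW.ncard ∧ EW.ncard ≤ 2 * (Δ - 2)) :=
  deg3_creation_coin_bounds_general Δ G hdeg E h12 Mopt hnf m p i hc hdu hd1 W W1 W2 W11 W12 EW hW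
    hW1 hW2 hW11 hW12 hEW

end

end MinGreedy
end

section
/- Let Δ ≥ 4, let G be a finite simple graph of maximum degree at most Δ, let M be the output matching of a 1-2-MinGreedy execution on G, and let M* be a maximum matching of G in normal form with respect to M. If {y,y'} ∈ M ∩ M* is a singleton component of (V, M ∪ M*), then the total number of uncanceled transfers whose source is y or y' is at most 2(Δ−2). -/
namespace MinGreedy

noncomputable section

open SimpleGraph

section Aux

variable {V : Type} {G : SimpleGraph V} (E : GreedyExec V G)

lemma adj_succ {j : ℕ} (hj : j < E.k) (a b : V) :
    (E.Gs (j + 1)).Adj a b ↔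
      (E.Gs j).Adj a b ∧ a ≠ E.sel j ∧ b ≠ E.sel j ∧ a ≠ E.oth j ∧ b ≠ E.oth j := by
  rw [E.step j hj]
  simp only [SimpleGraph.fromEdgeSet_adj, Set.mem_setOf_eq, SimpleGraph.mem_edgeSet,
    Sym2.mem_iff, not_or]
  constructor
  · rintro ⟨⟨h, ⟨h1, h2⟩, ⟨h3, h4⟩⟩, -⟩
    exact ⟨h, Ne.symm h1, Ne.symm h2, Ne.symm h3, Ne.symm h4⟩
  · rintro ⟨h, h1, h2, h3, h4⟩
    exact ⟨⟨h, ⟨Ne.symm h1, Ne.symm h2⟩, ⟨Ne.symm h3, Ne.symm h4⟩⟩, h.ne⟩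

lemma nbr_succ_subset {j : ℕ} (hj : j < E.k) (x : V) :
    (E.Gs (j + 1)).neighborSet x ⊆ (E.Gs j).neighborSet x := fun z hz =>
  ((adj_succ E hj x z).1 hz).1

lemma nbr_anti {j : ℕ} (x : V) :
    ∀ t, j ≤ t → t ≤ E.k → (E.Gs t).neighborSet x ⊆ (E.Gs j).neighborSet x := by
  intro t
  induction t with
  | zero =>
    intro h _
    have : j = 0 := Nat.le_zero.mp h
    subst this; exact subset_rfl
  | succ n ih =>
    intro h hk
    rcases Nat.lt_or_ge j (n + 1) with hlt | hge
    · have hn : j ≤ n := Nat.lt_succ_iff.mp hlt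
      exact (nbr_succ_subset E (by omega) x).trans (ih hn (by omega))
    · have : j = n + 1 := by omega
      subst this; exact subset_rfl

lemma deg_le_G {i : ℕ} (hik : i ≤ E.k) (x : V) [Fintype V] :
    deg (E.Gs i) x ≤ deg G x := by
  have h := nbr_anti E x i (Nat.zero_le i) hik
  rw [E.init] at h
  exact Set.ncard_le_ncard h (Set.toFinite _)

lemma not_adj_after {j : ℕ} (hj : j < E.k) {x : V} (hx : x = E.sel j ∨ x = E.oth j) :
    ∀ t, j < t → t ≤ E.k → ∀ z, ¬(E.Gs t).Adj x z := by
  intro t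
  induction t with
  | zero => intro h; omega
  | succ n ih =>
    intro hlt hle z hadj
    rcases Nat.lt_or_ge j n with h | h
    · exact ih h (by omega) z ((adj_succ E (by omega) x z).1 hadj).1
    · have : j = n := by omega
      subst this
      have h2 := (adj_succ E hj x z).1 hadj
      rcases hx with hx | hx
      · exact h2.2.1 hx
      · exact h2.2.2.2.1 hx

lemma matched_unique {j j' : ℕ} {x : V} (h : matchedAt E j x) (h' : matchedAt E j' x) :
    j = j' := by
  by_contra hne
  wlog hlt : j < j' generalizing j j'
  · exact this h' h (Ne.symm hne) (by omega)
  obtain ⟨hk', hx'⟩ := h'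
  have hadj := E.adj j' hk'
  rcases hx' with hx' | hx'
  · exact not_adj_after E h.1 h.2 j' hlt (le_of_lt hk') (E.oth j') (by rw [hx']; exact hadj)
  · exact not_adj_after E h.1 h.2 j' hlt (le_of_lt hk') (E.sel j') (by rw [hx']; exact hadj.symm)

lemma endpoint_not_covered {M Mopt : Set (Sym2 V)} {w : V} (h : IsPathEndpoint M Mopt w) :
    ∀ e ∈ M, w ∉ e := by
  obtain ⟨m, p, ⟨-, -, hend⟩, hw⟩ := h
  intro e he hmem
  rcases hw with hw | hw
  · rw [hw] at hmem; exact (hend e he).1 hmem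
  · rw [hw] at hmem; exact (hend e he).2 hmem

lemma uncanceled_transferAt {M Mopt : Set (Sym2 V)} {i : ℕ} {v w : V}
    (h : uncanceledAt E M Mopt i v w) : transferAt E M Mopt i v w := by
  unfold uncanceledAt at h
  rw [Nat.strongRecOn_eq] at h
  exact h.1

lemma transfer_adj {Mopt : Set (Sym2 V)} {i : ℕ} {v w : V}
    (h : transferAt E E.M Mopt i v w) : (E.Gs i).Adj v w := by
  obtain ⟨⟨hG, hM, -⟩, hw, hv, -⟩ := h
  have hwM : ∀ e ∈ E.M, w ∉ e := endpoint_not_covered hw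
  have key : ∀ j, j ≤ i → (E.Gs j).Adj v w := by
    intro j
    induction j with
    | zero => intro _; rw [E.init]; exact (SimpleGraph.mem_edgeSet G).1 hG
    | succ n ih =>
      intro hle
      have hn : n < E.k := by have := hv.1; omega
      rw [adj_succ E hn]
      refine ⟨ih (by omega), ?_, ?_, ?_, ?_⟩
      · intro hv'
        have : n = i := matched_unique E ⟨hn, Or.inl hv'⟩ hv
        omega
      · intro hw'
        exact hwM s(E.sel n, E.oth n) ⟨n, hn, rfl⟩ (by rw [hw']; exact Sym2.mem_mk_left _ _)
      · intro hv'
        have : n = i := matched_unique E ⟨hn, Or.inr hv'⟩ hv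
        omega
      · intro hw'
        exact hwM s(E.sel n, E.oth n) ⟨n, hn, rfl⟩ (by rw [hw']; exact Sym2.mem_mk_right _ _)
  exact key i le_rfl

lemma nbr_succ_eq {j : ℕ} (hj : j < E.k) {w : V} (h1 : w ≠ E.sel j) (h2 : w ≠ E.oth j) :
    (E.Gs (j + 1)).neighborSet w = (E.Gs j).neighborSet w \ {E.sel j, E.oth j} := by
  ext z
  simp only [SimpleGraph.mem_neighborSet, Set.mem_diff, Set.mem_insert_iff,
    Set.mem_singleton_iff, not_or]
  rw [adj_succ E hj]
  tauto

lemma deg_succ_eq {j : ℕ} (hj : j < E.k) {w : V} [Fintype V]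
    (h1 : w ≠ E.sel j) (h2 : w ≠ E.oth j) :
    deg (E.Gs (j + 1)) w =
      deg (E.Gs j) w - ((E.Gs j).neighborSet w ∩ {E.sel j, E.oth j}).ncard := by
  rw [deg, nbr_succ_eq E hj h1 h2, ← Set.diff_self_inter,
    Set.ncard_diff Set.inter_subset_left (Set.toFinite _)]
  rfl

lemma deg_matched_succ {j : ℕ} (hj : j < E.k) {x : V} [Fintype V]
    (hx : x = E.sel j ∨ x = E.oth j) : deg (E.Gs (j + 1)) x = 0 := by
  have hempty : (E.Gs (j + 1)).neighborSet x = ∅ := by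
    ext z
    simp only [SimpleGraph.mem_neighborSet, Set.mem_empty_iff_false, iff_false]
    intro hadj
    have h := (adj_succ E hj x z).1 hadj
    rcases hx with hx | hx
    · exact h.2.1 hx
    · exact h.2.2.2.1 hx
  rw [deg, hempty, Set.ncard_empty]

end Aux
lemma main_bound {V : Type} [Fintype V] {G : SimpleGraph V} (E : GreedyExec V G)
    (Δ : ℕ) (hΔ : 4 ≤ Δ) (hdeg : maxDegLE G Δ) (h12 : E.Is12MinGreedy)
    (Mopt : Set (Sym2 V)) {i : ℕ} (hi : i < E.k) :
    {w | transferAt E E.M Mopt i (E.sel i) w}.ncard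
      + {w | transferAt E E.M Mopt i (E.oth i) w}.ncard ≤ 2 * (Δ - 2) := by
  have hadj : (E.Gs i).Adj (E.sel i) (E.oth i) := E.adj i hi
  have hne : (E.sel i) ≠ (E.oth i) := hadj.ne
  have hMe : s((E.sel i), (E.oth i)) ∈ E.M := ⟨i, hi, rfl⟩
  have hTu_adj : ∀ w ∈ {w | transferAt E E.M Mopt i (E.sel i) w}, (E.Gs i).Adj (E.sel i) w ∧ w ≠ (E.oth i) := by
    intro w hw
    refine ⟨transfer_adj E hw, ?_⟩
    rintro rfl
    exact hw.1.2.1 hMe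
  have hTo_adj : ∀ w ∈ {w | transferAt E E.M Mopt i (E.oth i) w}, (E.Gs i).Adj (E.oth i) w ∧ w ≠ (E.sel i) := by
    intro w hw
    refine ⟨transfer_adj E hw, ?_⟩
    rintro rfl
    exact hw.1.2.1 (by rw [Sym2.eq_swap]; exact hMe)
  have hcardu : {w | transferAt E E.M Mopt i (E.sel i) w}.ncard + 1 ≤ deg (E.Gs i) (E.sel i) := by
    have h1 : {w | transferAt E E.M Mopt i (E.sel i) w}.ncard ≤ ((E.Gs i).neighborSet (E.sel i) \ {(E.oth i)}).ncard := by
      refine Set.ncard_le_ncard (fun w hw => ?_) (Set.toFinite _)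
      exact ⟨(hTu_adj w hw).1, by simpa using (hTu_adj w hw).2⟩
    have h2 : ((E.Gs i).neighborSet (E.sel i) \ {(E.oth i)}).ncard + 1 = deg (E.Gs i) (E.sel i) :=
      Set.ncard_diff_singleton_add_one hadj (Set.toFinite _)
    omega
  have hcardo : {w | transferAt E E.M Mopt i (E.oth i) w}.ncard + 1 ≤ deg (E.Gs i) (E.oth i) := by
    have h1 : {w | transferAt E E.M Mopt i (E.oth i) w}.ncard ≤ ((E.Gs i).neighborSet (E.oth i) \ {(E.sel i)}).ncard := by
      refine Set.ncard_le_ncard (fun w hw => ?_) (Set.toFinite _)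
      exact ⟨(hTo_adj w hw).1, by simpa using (hTo_adj w hw).2⟩
    have h2 : ((E.Gs i).neighborSet (E.oth i) \ {(E.sel i)}).ncard + 1 = deg (E.Gs i) (E.oth i) :=
      Set.ncard_diff_singleton_add_one hadj.symm (Set.toFinite _)
    omega
  have hdu_le : deg (E.Gs i) (E.sel i) ≤ Δ := (deg_le_G E (le_of_lt hi) (E.sel i)).trans (hdeg (E.sel i))
  have hdo_le : deg (E.Gs i) (E.oth i) ≤ Δ := (deg_le_G E (le_of_lt hi) (E.oth i)).trans (hdeg (E.oth i))
  by_cases hsmall : ∃ x, deg (E.Gs i) x = 1 ∨ deg (E.Gs i) x = 2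
  · obtain ⟨x, hx⟩ := hsmall
    have hxpos : 0 < deg (E.Gs i) x := by rcases hx with hx | hx <;> omega
    have hdu : deg (E.Gs i) (E.sel i) ≤ 2 := by
      have := h12 i hi ⟨x, hx⟩ x hxpos
      rcases hx with hx | hx <;> omega
    omega
  · push_neg at hsmall
    have hkey : ∀ w ∈ {w | transferAt E E.M Mopt i (E.sel i) w} ∪ {w | transferAt E E.M Mopt i (E.oth i) w}, (E.Gs i).Adj (E.sel i) w ∧ w ≠ (E.oth i) ∧ deg (E.Gs (i + 1)) w = 1 := by
      intro w hw
      have hws : w ≠ (E.sel i) ∧ w ≠ (E.oth i) ∧ 0 < deg (E.Gs i) w ∧ deg (E.Gs (i + 1)) w ≤ 1 ∧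
          IsPathEndpoint E.M Mopt w := by
        rcases hw with hw | hw
        · have h := hTu_adj w hw
          refine ⟨h.1.ne', h.2, ?_, hw.2.2.2, hw.2.1⟩
          exact (Set.ncard_pos (Set.toFinite _)).2 ⟨(E.sel i), h.1.symm⟩
        · have h := hTo_adj w hw
          refine ⟨h.2, h.1.ne', ?_, hw.2.2.2, hw.2.1⟩
          exact (Set.ncard_pos (Set.toFinite _)).2 ⟨(E.oth i), h.1.symm⟩
      obtain ⟨hwu, hwo, hpos, hle1, -⟩ := hws
      have h3 : 3 ≤ deg (E.Gs i) w := by have := hsmall w; omega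
      have hds := deg_succ_eq E hi hwu hwo
      have hcap : ((E.Gs i).neighborSet w ∩ {(E.sel i), (E.oth i)}).ncard ≤ 2 := by
        refine (Set.ncard_le_ncard Set.inter_subset_right (Set.toFinite _)).trans ?_
        exact (Set.ncard_insert_le _ _).trans (by simp)
      have hcap2 : ((E.Gs i).neighborSet w ∩ {(E.sel i), (E.oth i)}).ncard = 2 := by omega
      have hset : (E.Gs i).neighborSet w ∩ {(E.sel i), (E.oth i)} = {(E.sel i), (E.oth i)} := by
        apply Set.eq_of_subset_of_ncard_le Set.inter_subset_right ?_ (Set.toFinite _)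
        rw [hcap2, Set.ncard_pair hne]
      have huw : (E.sel i) ∈ (E.Gs i).neighborSet w := by
        have hm : (E.sel i) ∈ ((E.Gs i).neighborSet w ∩ {(E.sel i), (E.oth i)}) := by
          rw [hset]; exact Or.inl rfl
        exact hm.1
      exact ⟨huw.symm, hwo, by omega⟩
    rcases Set.eq_empty_or_nonempty ({w | transferAt E E.M Mopt i (E.sel i) w} ∪ {w | transferAt E E.M Mopt i (E.oth i) w}) with hC | ⟨w0, hw0⟩
    · obtain ⟨h1, h2⟩ := Set.union_empty_iff.mp hC
      rw [h1, h2, Set.ncard_empty]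
      omega
    · have hCu : {w | transferAt E E.M Mopt i (E.sel i) w}.ncard ≤ ({w | transferAt E E.M Mopt i (E.sel i) w} ∪ {w | transferAt E E.M Mopt i (E.oth i) w}).ncard :=
        Set.ncard_le_ncard Set.subset_union_left (Set.toFinite _)
      have hCo : {w | transferAt E E.M Mopt i (E.oth i) w}.ncard ≤ ({w | transferAt E E.M Mopt i (E.sel i) w} ∪ {w | transferAt E E.M Mopt i (E.oth i) w}).ncard :=
        Set.ncard_le_ncard Set.subset_union_right (Set.toFinite _)
      by_cases hduΔ : deg (E.Gs i) (E.sel i) < Δ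
      · have hCsub : {w | transferAt E E.M Mopt i (E.sel i) w} ∪ {w | transferAt E E.M Mopt i (E.oth i) w} ⊆ (E.Gs i).neighborSet (E.sel i) \ {(E.oth i)} := fun w hw =>
          ⟨(hkey w hw).1, by simpa using (hkey w hw).2.1⟩
        have h1 : ({w | transferAt E E.M Mopt i (E.sel i) w} ∪ {w | transferAt E E.M Mopt i (E.oth i) w}).ncard ≤ ((E.Gs i).neighborSet (E.sel i) \ {(E.oth i)}).ncard :=
          Set.ncard_le_ncard hCsub (Set.toFinite _)
        have h2 : ((E.Gs i).neighborSet (E.sel i) \ {(E.oth i)}).ncard + 1 = deg (E.Gs i) (E.sel i) :=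
          Set.ncard_diff_singleton_add_one hadj (Set.toFinite _)
        omega
      · have hduΔ' : deg (E.Gs i) (E.sel i) = Δ := by omega
        have hw0deg : deg (E.Gs (i + 1)) w0 = 1 := (hkey w0 hw0).2.2
        have hik : i + 1 < E.k := by
          rcases Nat.lt_or_ge (i + 1) E.k with h | h
          · exact h
          · exfalso
            have heqk : i + 1 = E.k := by omega
            have hne0 : ((E.Gs (i + 1)).neighborSet w0).Nonempty :=
              Set.nonempty_of_ncard_ne_zero
                (by show deg (E.Gs (i + 1)) w0 ≠ 0; omega)
            obtain ⟨z, hz⟩ := hne0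
            have hmem : s(w0, z) ∈ (E.Gs (i + 1)).edgeSet :=
              (SimpleGraph.mem_edgeSet _).2 hz
            rw [heqk, E.final] at hmem
            exact hmem
        have hadj1 := E.adj (i + 1) hik
        have hmin := h12 (i + 1) hik ⟨w0, Or.inl hw0deg⟩
        have hs1pos : 0 < deg (E.Gs (i + 1)) (E.sel (i + 1)) :=
          (Set.ncard_pos (Set.toFinite _)).2 ⟨E.oth (i + 1), hadj1⟩
        have hs1deg : deg (E.Gs (i + 1)) (E.sel (i + 1)) = 1 := by
          have := hmin w0 (by omega)
          omega
        have hs1u : (E.sel (i + 1)) ≠ (E.sel i) := by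
          intro h
          rw [h, deg_matched_succ E hi (Or.inl rfl)] at hs1deg
          omega
        have hs1o : (E.sel (i + 1)) ≠ (E.oth i) := by
          intro h
          rw [h, deg_matched_succ E hi (Or.inr rfl)] at hs1deg
          omega
        have hs1pos' : 0 < deg (E.Gs i) (E.sel (i + 1)) := by
          have hsub := nbr_succ_subset E hi (E.sel (i + 1))
          have := Set.ncard_le_ncard hsub (Set.toFinite _)
          have h0 : deg (E.Gs (i + 1)) (E.sel (i + 1)) ≤ deg (E.Gs i) (E.sel (i + 1)) := this
          omega
        have h3 : 3 ≤ deg (E.Gs i) (E.sel (i + 1)) := by have := hsmall (E.sel (i + 1)); omega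
        have hds := deg_succ_eq E hi hs1u hs1o
        have hcap : ((E.Gs i).neighborSet (E.sel (i + 1)) ∩ {(E.sel i), (E.oth i)}).ncard ≤ 2 := by
          refine (Set.ncard_le_ncard Set.inter_subset_right (Set.toFinite _)).trans ?_
          exact (Set.ncard_insert_le _ _).trans (by simp)
        have hcap2 : ((E.Gs i).neighborSet (E.sel (i + 1)) ∩ {(E.sel i), (E.oth i)}).ncard = 2 := by omega
        have hset : (E.Gs i).neighborSet (E.sel (i + 1)) ∩ {(E.sel i), (E.oth i)} = {(E.sel i), (E.oth i)} := by
          apply Set.eq_of_subset_of_ncard_le Set.inter_subset_right ?_ (Set.toFinite _)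
          rw [hcap2, Set.ncard_pair hne]
        have hus1 : (E.Gs i).Adj (E.sel i) (E.sel (i + 1)) := by
          have hm : (E.sel i) ∈ ((E.Gs i).neighborSet (E.sel (i + 1)) ∩ {(E.sel i), (E.oth i)}) := by
            rw [hset]; exact Or.inl rfl
          exact hm.1.symm
        have hs1not : (E.sel (i + 1)) ∉ {w | transferAt E E.M Mopt i (E.sel i) w} ∪ {w | transferAt E E.M Mopt i (E.oth i) w} := by
          intro hmem
          have hep : IsPathEndpoint E.M Mopt (E.sel (i + 1)) := by
            rcases hmem with hmem | hmem
            · exact hmem.2.1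
            · exact hmem.2.1
          exact endpoint_not_covered hep s(E.sel (i + 1), E.oth (i + 1)) ⟨i + 1, hik, rfl⟩
            (Sym2.mem_mk_left _ _)
        have hCsub : {w | transferAt E E.M Mopt i (E.sel i) w} ∪ {w | transferAt E E.M Mopt i (E.oth i) w} ⊆ (E.Gs i).neighborSet (E.sel i) \ {(E.oth i), (E.sel (i + 1))} := by
          intro w hw
          refine ⟨(hkey w hw).1, ?_⟩
          simp only [Set.mem_insert_iff, Set.mem_singleton_iff, not_or]
          refine ⟨(hkey w hw).2.1, fun h => hs1not ?_⟩
          rw [← h]; exact hw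
        have h1 : ({w | transferAt E E.M Mopt i (E.sel i) w} ∪ {w | transferAt E E.M Mopt i (E.oth i) w}).ncard ≤ ((E.Gs i).neighborSet (E.sel i) \ {(E.oth i), (E.sel (i + 1))}).ncard :=
          Set.ncard_le_ncard hCsub (Set.toFinite _)
        have h2 : ((E.Gs i).neighborSet (E.sel i) \ {(E.oth i), (E.sel (i + 1))}).ncard = deg (E.Gs i) (E.sel i) - 2 := by
          rw [Set.ncard_diff ?_ (Set.toFinite _), Set.ncard_pair (Ne.symm hs1o)]
          · rfl
          · intro z hz
            rcases hz with rfl | hz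
            · exact hadj
            · rw [Set.mem_singleton_iff] at hz
              subst hz
              exact hus1
        omega
/-- both nodes of a singleton pay at most 2(Δ−2) uncanceled transfers. -/
theorem singleton_uncanceled_bound {V : Type} [Fintype V] (Δ : ℕ) (hΔ : 4 ≤ Δ)
    (G : SimpleGraph V) (hdeg : maxDegLE G Δ)
    (E : GreedyExec V G) (h12 : E.Is12MinGreedy)
    (Mopt : Set (Sym2 V)) (hnf : NormalForm G E.M Mopt)
    (y y' : V) (hM : s(y, y') ∈ E.M) (hMopt : s(y, y') ∈ Mopt) :
    {q : V × V | IsUncanceledTransfer E E.M Mopt q.1 q.2 ∧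
      (q.1 = y ∨ q.1 = y')}.ncard ≤ 2 * (Δ - 2) := by
  obtain ⟨i, hi, heq⟩ := hM
  have hmb := main_bound E Δ hΔ hdeg h12 Mopt hi
  have hsub : {q : V × V | IsUncanceledTransfer E E.M Mopt q.1 q.2 ∧ (q.1 = y ∨ q.1 = y')}
      ⊆ (fun w => (E.sel i, w)) '' {w | transferAt E E.M Mopt i (E.sel i) w}
        ∪ (fun w => (E.oth i, w)) '' {w | transferAt E E.M Mopt i (E.oth i) w} := by
    rintro ⟨v, w⟩ ⟨⟨j, hj⟩, hv⟩
    have ht : transferAt E E.M Mopt j v w := uncanceled_transferAt E hj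
    have hvio : v = E.sel i ∨ v = E.oth i := by
      rcases Sym2.eq_iff.mp heq with ⟨h1, h2⟩ | ⟨h1, h2⟩ <;> rcases hv with rfl | rfl <;> tauto
    have hji : j = i := matched_unique E ht.2.2.1 ⟨hi, hvio⟩
    subst hji
    rcases hvio with h | h
    · subst h
      exact Or.inl ⟨w, ht, rfl⟩
    · subst h
      exact Or.inr ⟨w, ht, rfl⟩
  have hinj1 : Function.Injective (fun w : V => (E.sel i, w)) :=
    fun w1 w2 h => congrArg Prod.snd h
  have hinj2 : Function.Injective (fun w : V => (E.oth i, w)) :=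
    fun w1 w2 h => congrArg Prod.snd h
  calc {q : V × V | IsUncanceledTransfer E E.M Mopt q.1 q.2 ∧ (q.1 = y ∨ q.1 = y')}.ncard
      ≤ ((fun w => (E.sel i, w)) '' {w | transferAt E E.M Mopt i (E.sel i) w}
          ∪ (fun w => (E.oth i, w)) '' {w | transferAt E E.M Mopt i (E.oth i) w}).ncard :=
        Set.ncard_le_ncard hsub (Set.toFinite _)
    _ ≤ ((fun w => (E.sel i, w)) '' {w | transferAt E E.M Mopt i (E.sel i) w}).ncard
          + ((fun w => (E.oth i, w)) '' {w | transferAt E E.M Mopt i (E.oth i) w}).ncard :=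
        Set.ncard_union_le _ _
    _ = {w | transferAt E E.M Mopt i (E.sel i) w}.ncard
          + {w | transferAt E E.M Mopt i (E.oth i) w}.ncard := by
        rw [Set.ncard_image_of_injective _ hinj1, Set.ncard_image_of_injective _ hinj2]
    _ ≤ 2 * (Δ - 2) := hmb

end

end MinGreedy
end

section
/- For every integer Δ ≥ 3 there exist a finite simple graph G of maximum degree at most Δ and a MinGreedy execution on G whose output matching M satisfies |M| = Δ−1, while G contains a matching of size 2Δ−3; in particular, |M| ≤ ((Δ−1)/(2Δ−3))·ν(G), so the worst-case approximation guarantee (Δ−1)/(2Δ−3) for MinGreedy on graphs of maximum degree Δ is tight. -/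
namespace MinGreedy

noncomputable section

open SimpleGraph

/-! Take `n = Δ - 3` layers, each a triangle `u i, t i, a i` with a pendant edge `t i b i`, and a
six-vertex gadget (the cycle `p 0, …, p 4` and a vertex `p 5` adjacent to `p 1, p 4`) whose two hubs
`p 1, p 4` are joined to every `b i`, so that the hubs have degree `Δ`. As long as the gadget is
untouched no vertex has degree `1`, while `u i` (and, once the layers are gone, `p 2`) has degree
`2`; so MinGreedy may match `u i t i` layer by layer, then `p 2 p 1`, and finally `p 3 p 4`, with `p 3`
of degree `1` by then: `Δ - 1` edges in all.
The edges `u i a i`, `t i b i`, `p 0 p 1`, `p 2 p 3`, `p 4 p 5` form a matching of size `2Δ - 3`. -/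

section General

variable {V : Type}

def removeVerts (G : SimpleGraph V) (S : Set V) : SimpleGraph V where
  Adj x y := G.Adj x y ∧ x ∉ S ∧ y ∉ S
  symm := ⟨fun _ _ h => ⟨h.1.symm, h.2.2, h.2.1⟩⟩
  loopless := ⟨fun x h => G.loopless.irrefl x h.1⟩

@[simp]
lemma removeVerts_adj {G : SimpleGraph V} {S : Set V} {x y : V} :
    (removeVerts G S).Adj x y ↔ G.Adj x y ∧ x ∉ S ∧ y ∉ S :=
  Iff.rfl

@[simp]
lemma removeVerts_empty (G : SimpleGraph V) : removeVerts G ∅ = G := by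
  ext; simp

lemma removeVerts_insert_insert (G : SimpleGraph V) (S : Set V) (u v : V) :
    removeVerts G (insert u (insert v S)) =
      fromEdgeSet {e | e ∈ (removeVerts G S).edgeSet ∧ u ∉ e ∧ v ∉ e} := by
  ext x y
  simp only [removeVerts_adj, Set.mem_insert_iff, fromEdgeSet_adj, Set.mem_ofPred_eq,
    mem_edgeSet, Sym2.mem_iff]
  grind [Adj.ne]

lemma edgeSet_removeVerts_eq_empty {G : SimpleGraph V} {S : Set V}
    (h : ∀ x y, G.Adj x y → x ∈ S ∨ y ∈ S) : (removeVerts G S).edgeSet = ∅ := by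
  rw [Set.eq_empty_iff_forall_notMem]
  rintro e he
  induction e using Sym2.ind with
  | h x y => exact (h x y he.1).elim he.2.1 he.2.2

lemma neighborSet_removeVerts (G : SimpleGraph V) (S : Set V) (x : V) :
    (removeVerts G S).neighborSet x ⊆ G.neighborSet x \ S :=
  fun _ h => ⟨h.1, h.2.2⟩

lemma deg_le_of_neighborSet_subset [Finite V] {H : SimpleGraph V} {x : V} {s : Set V}
    (h : H.neighborSet x ⊆ s) : deg H x ≤ s.ncard :=
  Set.ncard_le_ncard h

lemma two_le_deg [Finite V] {H : SimpleGraph V} {x y z : V} (hy : H.Adj x y) (hz : H.Adj x z)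
    (hyz : y ≠ z) : 2 ≤ deg H x := by
  rw [← Set.ncard_pair hyz]
  exact Set.ncard_le_ncard (Set.pair_subset hy hz)

lemma deg_removeVerts_le [Finite V] (G : SimpleGraph V) (S : Set V) (x : V) :
    deg (removeVerts G S) x ≤ deg G x :=
  Set.ncard_le_ncard fun _ h => h.1

lemma deg_removeVerts_of_mem {G : SimpleGraph V} {S : Set V} {x : V} (hx : x ∈ S) :
    deg (removeVerts G S) x = 0 := by
  rw [deg, Set.eq_empty_of_forall_notMem (s := (removeVerts G S).neighborSet x)
    fun _ h => h.2.1 hx, Set.ncard_empty]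

lemma deg_removeVerts_of_neighborSet_subset {G : SimpleGraph V} {S : Set V} {x : V}
    (hx : G.neighborSet x ⊆ S) : deg (removeVerts G S) x = 0 := by
  rw [deg, Set.eq_empty_of_forall_notMem (s := (removeVerts G S).neighborSet x)
    fun _ h => h.2.2 (hx h.1), Set.ncard_empty]

lemma le_nu_of_isMatchingSet [Finite V] {G : SimpleGraph V} {N : Set (Sym2 V)}
    (hN : IsMatchingSet G N) : N.ncard ≤ nu G :=
  le_csSup ⟨Nat.card (Sym2 V), by rintro _ ⟨M, -, rfl⟩; exact Set.ncard_le_card M⟩ ⟨N, hN, rfl⟩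

lemma isMatchingSet_range {ι : Type} {G : SimpleGraph V} {f : ι → Sym2 V}
    (hG : ∀ i, f i ∈ G.edgeSet) (hdisj : ∀ i j, i ≠ j → ∀ x ∈ f i, x ∉ f j) :
    IsMatchingSet G (Set.range f) := by
  refine ⟨Set.range_subset_iff.2 hG, ?_⟩
  rintro _ ⟨i, rfl⟩ _ ⟨j, rfl⟩ hne
  exact hdisj i j (fun h => hne (h ▸ rfl))

lemma ncard_range_of_pairwise_disjoint {ι : Type} [Finite ι] {f : ι → Sym2 V}
    (hdisj : ∀ i j, i ≠ j → ∀ x ∈ f i, x ∉ f j) : (Set.range f).ncard = Nat.card ι := by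
  refine Set.ncard_range_of_injective fun i j hij => by_contra fun hne => ?_
  exact hdisj i j hne _ (Sym2.out_fst_mem (f i)) (hij ▸ Sym2.out_fst_mem (f i))

end General

namespace GreedyExec

variable {V : Type} {G : SimpleGraph V} (E : GreedyExec V G)

lemma edgeSet_antitone {i j : ℕ} (hij : i ≤ j) (hj : j ≤ E.k) :
    (E.Gs j).edgeSet ⊆ (E.Gs i).edgeSet := by
  induction j, hij using Nat.le_induction with
  | base => exact le_rfl
  | succ j _ ih =>
    intro e he
    rw [E.step j (by omega), edgeSet_fromEdgeSet] at he
    exact ih (by omega) he.1.1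

lemma notMem_of_mem_edgeSet {i j : ℕ} (hij : i < j) (hj : j ≤ E.k) {e : Sym2 V}
    (he : e ∈ (E.Gs j).edgeSet) : E.sel i ∉ e ∧ E.oth i ∉ e := by
  have he' := E.edgeSet_antitone hij hj he
  rw [E.step i (by omega), edgeSet_fromEdgeSet] at he'
  exact he'.1.2

theorem ncard_M : E.M.ncard = E.k := by
  have hinj : Set.InjOn (fun i => s(E.sel i, E.oth i)) (Set.Iio E.k) := by
    intro i hi j hj hij
    by_contra hne
    wlog hlt : i < j generalizing i j
    · exact this hj hi hij.symm (Ne.symm hne) (by omega)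
    have hsel : E.sel i ∈ s(E.sel j, E.oth j) := by
      rw [← show s(E.sel i, E.oth i) = s(E.sel j, E.oth j) from hij]
      exact Sym2.mem_mk_left _ _
    exact (E.notMem_of_mem_edgeSet hlt hj.le (E.adj j hj)).1 hsel
  have hM : E.M = (fun i => s(E.sel i, E.oth i)) '' Set.Iio E.k := by
    ext e; simp [GreedyExec.M, eq_comm]
  rw [hM, hinj.ncard_image, ← Finset.coe_range, Set.ncard_coe_finset,
    Finset.card_range]

end GreedyExec

namespace TightExample

open Sum

variable {n : ℕ}

abbrev V (n : ℕ) : Type := (Fin n × Fin 4) ⊕ Fin 6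

abbrev u (i : Fin n) : V n := inl (i, 0)
abbrev t (i : Fin n) : V n := inl (i, 1)
abbrev a (i : Fin n) : V n := inl (i, 2)
abbrev b (i : Fin n) : V n := inl (i, 3)
abbrev p (j : Fin 6) : V n := inr j

def edgeRel (n : ℕ) : V n → V n → Prop
  | inl (i, c), inl (j, d) => i = j ∧ (c, d) ∈ ({(0, 1), (0, 2), (1, 2), (1, 3)} : Finset _)
  | inl (_, c), inr q => c = 3 ∧ (q = 1 ∨ q = 4)
  | inr q, inr r => (q, r) ∈ ({(0, 1), (1, 2), (2, 3), (3, 4), (0, 4), (4, 5), (1, 5)} : Finset _)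
  | inr _, inl _ => False

def graph (n : ℕ) : SimpleGraph (V n) := fromRel (edgeRel n)

lemma neighborSet_u (i : Fin n) : (graph n).neighborSet (u i) = {t i, a i} := by
  ext (⟨j, d⟩ | q) <;> simp [graph, edgeRel]; grind

lemma neighborSet_t (i : Fin n) : (graph n).neighborSet (t i) = {u i, a i, b i} := by
  ext (⟨j, d⟩ | q) <;> simp [graph, edgeRel]; grind

lemma neighborSet_a (i : Fin n) : (graph n).neighborSet (a i) = {u i, t i} := by
  ext (⟨j, d⟩ | q) <;> simp [graph, edgeRel]; grind

lemma neighborSet_b (i : Fin n) : (graph n).neighborSet (b i) = {t i, p 1, p 4} := by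
  ext (⟨j, d⟩ | q) <;> simp [graph, edgeRel]; grind

lemma neighborSet_p0 : (graph n).neighborSet (p 0) = {p 1, p 4} := by
  ext (⟨j, d⟩ | q) <;> simp [graph, edgeRel]; grind

lemma neighborSet_p1 : (graph n).neighborSet (p 1) = {p 0, p 2, p 5} ∪ Set.range b := by
  ext (⟨j, d⟩ | q) <;> simp [graph, edgeRel] <;> grind

lemma neighborSet_p2 : (graph n).neighborSet (p 2) = {p 1, p 3} := by
  ext (⟨j, d⟩ | q) <;> simp [graph, edgeRel]; grind

lemma neighborSet_p3 : (graph n).neighborSet (p 3) = {p 2, p 4} := by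
  ext (⟨j, d⟩ | q) <;> simp [graph, edgeRel]; grind

lemma neighborSet_p4 : (graph n).neighborSet (p 4) = {p 0, p 3, p 5} ∪ Set.range b := by
  ext (⟨j, d⟩ | q) <;> simp [graph, edgeRel] <;> grind

lemma neighborSet_p5 : (graph n).neighborSet (p 5) = {p 1, p 4} := by
  ext (⟨j, d⟩ | q) <;> simp [graph, edgeRel]; grind

def matchedBefore (n m : ℕ) : Set (V n) :=
  {x | match x with
    | inl (i, c) => (i : ℕ) < m ∧ (c = 0 ∨ c = 1)
    | inr q => n < m ∧ (q = 1 ∨ q = 2) ∨ n + 1 < m ∧ (q = 3 ∨ q = 4)}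

def sel (n m : ℕ) : V n := if h : m < n then u ⟨m, h⟩ else if m = n then p 2 else p 3

def oth (n m : ℕ) : V n := if h : m < n then t ⟨m, h⟩ else if m = n then p 1 else p 4

lemma matchedBefore_zero : matchedBefore n 0 = ∅ := by
  ext (⟨i, c⟩ | q) <;> simp [matchedBefore]

lemma matchedBefore_succ {m : ℕ} (hm : m < n + 2) :
    matchedBefore n (m + 1) = insert (sel n m) (insert (oth n m) (matchedBefore n m)) := by
  obtain hm | rfl | rfl : m < n ∨ m = n ∨ m = n + 1 := by omega
  all_goals ext (⟨i, c⟩ | q) <;> simp [matchedBefore, sel, oth, *] <;> grind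

def graphAt (n m : ℕ) : SimpleGraph (V n) := removeVerts (graph n) (matchedBefore n m)

lemma graphAt_adj_sel {m : ℕ} (hm : m < n + 2) : (graphAt n m).Adj (sel n m) (oth n m) := by
  obtain hm | rfl | rfl : m < n ∨ m = n ∨ m = n + 1 := by omega
  all_goals simp [graphAt, graph, edgeRel, matchedBefore, sel, oth, hm]

lemma mem_matchedBefore_final_of_adj {x y : V n} (h : (graph n).Adj x y) :
    x ∈ matchedBefore n (n + 2) ∨ y ∈ matchedBefore n (n + 2) := by
  rcases x with ⟨i, c⟩ | q <;> rcases y with ⟨j, d⟩ | r <;>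
    simp [graph, edgeRel, matchedBefore] at h ⊢ <;> grind

def exec (n : ℕ) : GreedyExec (V n) (graph n) where
  k := n + 2
  Gs := graphAt n
  sel := sel n
  oth := oth n
  init := by simp [graphAt, matchedBefore_zero]
  adj _ := graphAt_adj_sel
  step _ hm := by rw [graphAt, graphAt, matchedBefore_succ hm, removeVerts_insert_insert]
  final := edgeSet_removeVerts_eq_empty fun _ _ => mem_matchedBefore_final_of_adj

lemma deg_graphAt_eq_zero_or_two_le {m : ℕ} (hm : m ≤ n) (x : V n) :
    deg (graphAt n m) x = 0 ∨ 2 ≤ deg (graphAt n m) x := by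
  rcases x with ⟨i, c⟩ | q
  · by_cases hi : (i : ℕ) < m
    · fin_cases c
      · exact Or.inl (deg_removeVerts_of_mem (by simp [matchedBefore, hi]))
      · exact Or.inl (deg_removeVerts_of_mem (by simp [matchedBefore, hi]))
      · refine Or.inl (deg_removeVerts_of_neighborSet_subset ?_)
        simp [neighborSet_a, Set.insert_subset_iff, matchedBefore, hi]
      · refine Or.inr (two_le_deg (y := p 1) (z := p 4) ?_ ?_ (by simp)) <;>
          simp [graphAt, graph, edgeRel, matchedBefore] <;> omega
    · refine Or.inr ?_
      fin_cases c
      · refine two_le_deg (y := t i) (z := a i) ?_ ?_ (by simp) <;>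
          simp [graphAt, graph, edgeRel, matchedBefore] <;> omega
      · refine two_le_deg (y := u i) (z := a i) ?_ ?_ (by simp) <;>
          simp [graphAt, graph, edgeRel, matchedBefore] <;> omega
      · refine two_le_deg (y := u i) (z := t i) ?_ ?_ (by simp) <;>
          simp [graphAt, graph, edgeRel, matchedBefore] <;> omega
      · refine two_le_deg (y := p 1) (z := p 4) ?_ ?_ (by simp) <;>
          simp [graphAt, graph, edgeRel, matchedBefore] <;> omega
  · refine Or.inr ?_
    fin_cases q
    · refine two_le_deg (y := p 1) (z := p 4) ?_ ?_ (by simp) <;>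
        simp [graphAt, graph, edgeRel, matchedBefore] <;> omega
    · refine two_le_deg (y := p 0) (z := p 2) ?_ ?_ (by simp) <;>
        simp [graphAt, graph, edgeRel, matchedBefore] <;> omega
    · refine two_le_deg (y := p 1) (z := p 3) ?_ ?_ (by simp) <;>
        simp [graphAt, graph, edgeRel, matchedBefore] <;> omega
    · refine two_le_deg (y := p 2) (z := p 4) ?_ ?_ (by simp) <;>
        simp [graphAt, graph, edgeRel, matchedBefore] <;> omega
    · refine two_le_deg (y := p 3) (z := p 5) ?_ ?_ (by simp) <;>
        simp [graphAt, graph, edgeRel, matchedBefore] <;> omega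
    · refine two_le_deg (y := p 1) (z := p 4) ?_ ?_ (by simp) <;>
        simp [graphAt, graph, edgeRel, matchedBefore] <;> omega

lemma deg_graphAt_sel_le_two {m : ℕ} (hm : m ≤ n) : deg (graphAt n m) (sel n m) ≤ 2 := by
  refine (deg_removeVerts_le _ _ _).trans ?_
  obtain hm | rfl : m < n ∨ m = n := by omega
  · simp [sel, hm, deg, neighborSet_u]
  · simp [sel, deg, neighborSet_p2]

lemma deg_graphAt_sel_last : deg (graphAt n (n + 1)) (sel n (n + 1)) ≤ 1 := by
  have hsub : (graphAt n (n + 1)).neighborSet (sel n (n + 1)) ⊆ {p 4} := by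
    intro y hy
    have := neighborSet_removeVerts _ _ _ hy
    simp_all [sel, neighborSet_p3, matchedBefore]
  simpa using deg_le_of_neighborSet_subset hsub

theorem exec_isMinGreedy : (exec n).IsMinGreedy := by
  intro m hm x hx
  change deg (graphAt n m) (sel n m) ≤ deg (graphAt n m) x
  change 0 < deg (graphAt n m) x at hx
  obtain hm | rfl : m ≤ n ∨ m = n + 1 := by change m < n + 2 at hm; omega
  · have := deg_graphAt_eq_zero_or_two_le hm x
    have := deg_graphAt_sel_le_two hm
    omega
  · have := deg_graphAt_sel_last (n := n)
    omega

lemma graph_maxDegLE : maxDegLE (graph n) (n + 3) := by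
  have hb : (Set.range (b (n := n))).ncard = n := by
    rw [Set.ncard_range_of_injective fun i j h => by simpa using h, Nat.card_fin]
  have hhub (s : Set (V n)) (hs : s.ncard = 3) : (s ∪ Set.range b).ncard ≤ n + 3 := by
    grw [Set.ncard_union_le, hs, hb]
    omega
  rintro (⟨i, c⟩ | q)
  · fin_cases c <;> simp [deg, neighborSet_u, neighborSet_t, neighborSet_a, neighborSet_b]
  · fin_cases q <;> simp [deg, neighborSet_p0, neighborSet_p1, neighborSet_p2, neighborSet_p3,
      neighborSet_p4, neighborSet_p5, hhub]

def optimalMatching : Fin n ⊕ Fin n ⊕ Fin 3 → Sym2 (V n)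
  | inl i => s(u i, a i)
  | inr (inl i) => s(t i, b i)
  | inr (inr 0) => s(p 0, p 1)
  | inr (inr 1) => s(p 2, p 3)
  | inr (inr 2) => s(p 4, p 5)

lemma optimalMatching_disjoint (i j : Fin n ⊕ Fin n ⊕ Fin 3) (hij : i ≠ j) :
    ∀ x ∈ optimalMatching i, x ∉ optimalMatching j := by
  rcases i with i | i | i <;> rcases j with j | j | j <;> (try fin_cases i) <;>
    (try fin_cases j) <;> simp_all [optimalMatching]

lemma isMatchingSet_optimalMatching : IsMatchingSet (graph n) (Set.range optimalMatching) := by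
  refine isMatchingSet_range (fun i => ?_) optimalMatching_disjoint
  rcases i with i | i | i <;> (try fin_cases i) <;> simp [optimalMatching, graph, edgeRel]

lemma ncard_optimalMatching : (Set.range (optimalMatching (n := n))).ncard = 2 * n + 3 := by
  rw [ncard_range_of_pairwise_disjoint optimalMatching_disjoint]
  simp only [Nat.card_sum, Nat.card_fin]
  ring

end TightExample

/-- the (Δ−1)/(2Δ−3) guarantee for MinGreedy is tight: there is a graph of
maximum degree at most Δ and a MinGreedy execution producing a matching of size Δ−1,
while the graph has a matching of size 2Δ−3. -/
theorem minGreedy_tight (Δ : ℕ) (hΔ : 3 ≤ Δ) :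
    ∃ (V : Type) (_ : Fintype V) (G : SimpleGraph V) (E : GreedyExec V G),
      maxDegLE G Δ ∧ E.IsMinGreedy ∧
      (E.M).ncard = Δ - 1 ∧
      (∃ N : Set (Sym2 V), IsMatchingSet G N ∧ N.ncard = 2 * Δ - 3) ∧
      ((E.M).ncard : ℝ) ≤ (((Δ : ℝ) - 1) / (2 * (Δ : ℝ) - 3)) * (nu G : ℝ) := by
  open TightExample in
  obtain ⟨n, rfl⟩ : ∃ n, Δ = n + 3 := ⟨Δ - 3, by omega⟩
  have hM : (exec n).M.ncard = n + 2 := (exec n).ncard_M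
  have hnu : 2 * n + 3 ≤ nu (graph n) :=
    ncard_optimalMatching (n := n) ▸ le_nu_of_isMatchingSet isMatchingSet_optimalMatching
  refine ⟨V n, inferInstance, graph n, exec n, graph_maxDegLE, exec_isMinGreedy, by omega,
    ⟨_, isMatchingSet_optimalMatching, by rw [ncard_optimalMatching]; omega⟩, ?_⟩
  have hnu' : (2 * n + 3 : ℝ) ≤ nu (graph n) := by exact_mod_cast hnu
  push_cast
  rw [hM, div_mul_eq_mul_div, le_div_iff₀ (by linarith)]
  push_cast
  nlinarith

end

end MinGreedy
end
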